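/- arXiv:2205.11657 — 9 statements merged into one kernel-verified Lean document; each statement's English description precedes it below -/
import Mathlib

section
/- Let R be a commutative ring of characteristic p and let R[F] be the twisted polynomial ring with relation F·a = a^p·F for all a ∈ R. Then the multiplicative set {F^i : i ≥ 0} satisfies the left Ore condition in R[F]. -/
/-- Let `R` be a commutative ring of characteristic `p` and let `R[F]` be the
twisted polynomial ring with relation `F·a = a^p·F` for all `a ∈ R`.  We encode `R[F]`
abstractly: a ring `A` together with a ring map `ι : R → A` and an element `F : A`
satisfying the twisted commutation rule, such that `A` is free as a left `R`-module on the
powers `F^i` (expressed by bijectivity of the representation map from finitely supported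
functions `ℕ →₀ R`).  The conclusion is the left Ore condition for the multiplicative set
`{F^i : i ≥ 0}`: for every `s = F^i` and `a ∈ A` there are `t = F^j` and `b ∈ A` with
`b * s = t * a`, together with the cancellation condition. -/
theorem stmt0 (p : ℕ) [Fact p.Prime] (R : Type*) [CommRing R] [CharP R p]
    (A : Type*) [Ring A] (ι : R →+* A) (F : A)
    (hcomm : ∀ a : R, F * ι a = ι (a ^ p) * F)
    (hbasis : Function.Bijective fun c : ℕ →₀ R => c.sum fun i a => ι a * F ^ i) :
    (∀ (i : ℕ) (a : A), ∃ (j : ℕ) (b : A), b * F ^ i = F ^ j * a) ∧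
    (∀ (i : ℕ) (a : A), a * F ^ i = 0 → ∃ j : ℕ, F ^ j * a = 0) := by
  set f : (ℕ →₀ R) → A := fun c => c.sum fun i a => ι a * F ^ i with hf
  -- key commutation: F * f c = f (c.mapRange (·^p) _) * F
  have key : ∀ c : ℕ →₀ R,
      F * f c = f (c.mapRange (· ^ p) (zero_pow (Nat.Prime.ne_zero Fact.out))) * F := by
    intro c
    rw [hf]
    simp only
    rw [Finsupp.mul_sum, Finsupp.sum_mul,
      Finsupp.sum_mapRange_index (by intro i; simp)]
    refine Finsupp.sum_congr fun i _ => ?_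
    rw [← mul_assoc, hcomm, mul_assoc, mul_assoc, ← pow_succ, ← pow_succ']
  -- one-step Ore
  have step : ∀ a : A, ∃ b : A, b * F = F * a := by
    intro a
    obtain ⟨c, rfl⟩ := hbasis.2 a
    exact ⟨f (c.mapRange (· ^ p) (zero_pow (Nat.Prime.ne_zero Fact.out))), (key c).symm⟩
  have ore : ∀ (i : ℕ) (a : A), ∃ b : A, b * F ^ i = F ^ i * a := by
    intro i
    induction i with
    | zero => intro a; exact ⟨a, by simp⟩
    | succ i ih =>
        intro a
        obtain ⟨b1, hb1⟩ := step a
        obtain ⟨b2, hb2⟩ := ih b1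
        refine ⟨b2, ?_⟩
        rw [pow_succ, ← mul_assoc, hb2, mul_assoc, hb1, ← mul_assoc, ← pow_succ,
          pow_succ, mul_assoc]
  -- injectivity of right multiplication by F
  have cancel1 : ∀ a : A, a * F = 0 → a = 0 := by
    intro a ha
    obtain ⟨c, rfl⟩ := hbasis.2 a
    have h1 : f c * F = f (c.embDomain ⟨Nat.succ, Nat.succ_injective⟩) := by
      rw [hf]
      simp only
      rw [Finsupp.sum_embDomain, Finsupp.sum_mul]
      refine Finsupp.sum_congr fun i _ => ?_
      simp [mul_assoc, pow_succ]
    have h0 : f 0 = 0 := by rw [hf]; exact Finsupp.sum_zero_index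
    have h2 : f (c.embDomain ⟨Nat.succ, Nat.succ_injective⟩) = f 0 := by
      rw [← h1, ha, h0]
    have h4 : c = 0 := by
      have h3 := hbasis.1 h2
      rwa [Finsupp.embDomain_eq_zero] at h3
    rw [h4]; exact h0
  have cancel : ∀ (i : ℕ) (a : A), a * F ^ i = 0 → a = 0 := by
    intro i
    induction i with
    | zero => intro a ha; simpa using ha
    | succ i ih =>
        intro a ha
        rw [pow_succ, ← mul_assoc] at ha
        exact ih a (cancel1 _ ha)
  refine ⟨fun i a => ⟨i, (ore i a).choose, (ore i a).choose_spec⟩,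
    fun i a ha => ⟨0, by simp [cancel i a ha]⟩⟩
end

section
/- Let R be a perfect commutative ring of characteristic p (the Frobenius x ↦ x^p is bijective). For the twisted Laurent polynomial ring R[F^{±1}] (with F·a = a^p·F), left multiplication by F−1 on R[F^{±1}] is injective, and the quotient R[F^{±1}]/R[F^{±1}]·(F−1) is isomorphic to R as a left R-module, i.e., there is a short exact sequence 0 → R[F^{±1}] →(F−1)· R[F^{±1}] → R → 0 of right R[F^{±1}]-modules. -/
/-!
Write elements of `A` as `Σ ι(aᵢ) Fⁱ`. Since `F · ι(a) Fⁱ = ι(aᵖ) Fⁱ⁺¹`, left multiplication by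
`F` shifts the coefficients while raising them to the `p`-th power. Hence a solution of
`(F - 1) z = 0` has coefficients with `cᵢ₊₁ = cᵢᵖ`, and finiteness of the support forces
`c = 0`. On the other side, `ι(bᵖ) Fⁱ⁺¹ - ι(b) Fⁱ = (F - 1) ι(b) Fⁱ`, so modulo the image of
`F - 1` every monomial `ι(a) Fⁱ` is congruent to the constant `ι(φ⁻ⁱ a) = ι(π(ι(a) Fⁱ))`;
thus `x ≡ ι(π x)` for every `x`, while `π` is invariant under left multiplication by `F`.
-/

/-- The `i`-th integer power of the Frobenius automorphism of a perfect ring. -/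
noncomputable def phiZ (p : ℕ) (R : Type*) [CommRing R] [Fact p.Prime] [CharP R p]
    [PerfectRing R p] (i : ℤ) : R ≃+* R :=
  ((frobeniusEquiv R p : RingAut R) ^ i : RingAut R)

theorem Finsupp.eq_zero_of_apply_add_one {M : Type*} [Zero M] (c : ℤ →₀ M) (f : M → M)
    (hf : f 0 = 0) (h : ∀ j, c (j + 1) = f (c j)) : c = 0 := by
  have iterate : ∀ (k : ℤ) (n : ℕ), c (k + n) = f^[n] (c k) := by
    intro k n
    induction n with
    | zero => simp
    | succ n ih => rw [Nat.cast_succ, ← add_assoc, h, ih, Function.iterate_succ_apply']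
  obtain ⟨m, hm⟩ := c.support.bddBelow
  ext j
  set k := min j (m - 1)
  have hk : c k = 0 := by
    by_contra hck
    have : m ≤ k := hm (Finsupp.mem_support_iff.mpr hck)
    omega
  have hj : j = k + (j - k).toNat := by omega
  rw [hj, iterate, hk, Function.iterate_fixed hf, Finsupp.coe_zero, Pi.zero_apply]

section Frobenius

variable (p : ℕ) (R : Type*) [CommRing R] [Fact p.Prime] [CharP R p] [PerfectRing R p]

theorem phiZ_phiZ (i j : ℤ) (a : R) : phiZ p R i (phiZ p R j a) = phiZ p R (i + j) a := by
  simp only [phiZ, zpow_add]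
  rfl

theorem phiZ_zero_apply (a : R) : phiZ p R 0 a = a := by
  simp only [phiZ, zpow_zero]
  rfl

theorem phiZ_one_apply (a : R) : phiZ p R 1 a = a ^ p := by
  simp [phiZ, frobenius_def]

theorem phiZ_pow_char (i : ℤ) (a : R) : phiZ p R i (a ^ p) = phiZ p R (i + 1) a := by
  rw [← phiZ_one_apply p R a, phiZ_phiZ]

end Frobenius

section TwistedLaurent

variable {p : ℕ} {R : Type*} [CommRing R] {A : Type*} [Ring A] (ι : R →+* A) (u : Aˣ)

def laurentSum (c : ℤ →₀ R) : A :=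
  c.sum fun i a => ι a * ((u ^ i : Aˣ) : A)

variable {ι u}

theorem units_mul_ι_mul_zpow (hcomm : ∀ a : R, (u : A) * ι a = ι (a ^ p) * u) (b : R) (j : ℤ) :
    (u : A) * (ι b * ((u ^ j : Aˣ) : A)) = ι (b ^ p) * ((u ^ (j + 1) : Aˣ) : A) := by
  rw [← mul_assoc, hcomm, mul_assoc, add_comm, zpow_add, zpow_one, Units.val_mul]

theorem units_sub_one_mul_ι_mul_zpow (hcomm : ∀ a : R, (u : A) * ι a = ι (a ^ p) * u)
    (b : R) (j : ℤ) :
    ((u : A) - 1) * (ι b * ((u ^ j : Aˣ) : A)) =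
      ι (b ^ p) * ((u ^ (j + 1) : Aˣ) : A) - ι b * ((u ^ j : Aˣ) : A) := by
  rw [sub_mul, one_mul, units_mul_ι_mul_zpow hcomm]

theorem units_mul_laurentSum [ExpChar R p] (hcomm : ∀ a : R, (u : A) * ι a = ι (a ^ p) * u)
    (c : ℤ →₀ R) :
    (u : A) * laurentSum ι u c =
      laurentSum ι u ((c.mapRange (frobenius R p) (map_zero _)).mapDomain (· + 1)) := by
  rw [laurentSum, laurentSum, Finsupp.sum_mapDomain_index_inj (add_left_injective 1),
    Finsupp.sum_mapRange_index (fun _ => by rw [map_zero, zero_mul]), Finsupp.mul_sum]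
  exact Finsupp.sum_congr fun i _ => units_mul_ι_mul_zpow hcomm _ _

theorem eq_zero_of_units_mul_eq_self [ExpChar R p]
    (hcomm : ∀ a : R, (u : A) * ι a = ι (a ^ p) * u)
    (hinj : Function.Injective (laurentSum ι u)) (c : ℤ →₀ R)
    (hc : (u : A) * laurentSum ι u c = laurentSum ι u c) : c = 0 := by
  rw [units_mul_laurentSum hcomm] at hc
  refine c.eq_zero_of_apply_add_one (frobenius R p) (map_zero _) fun j => ?_
  have hcoeff := DFunLike.congr_fun (hinj hc) (j + 1)
  rwa [Finsupp.mapDomain_apply (add_left_injective 1), Finsupp.mapRange_apply, eq_comm] at hcoeff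

end TwistedLaurent

section Perfect

variable {p : ℕ} [Fact p.Prime] {R : Type*} [CommRing R] [CharP R p] [PerfectRing R p]
  {A : Type*} [Ring A] {ι : R →+* A} {u : Aˣ}

theorem map_units_mul_eq (hcomm : ∀ a : R, (u : A) * ι a = ι (a ^ p) * u)
    (hsurj : Function.Surjective (laurentSum ι u)) (π : A →+ R)
    (hπ : ∀ (a : R) (i : ℤ), π (ι a * ((u ^ i : Aˣ) : A)) = phiZ p R (-i) a) (x : A) :
    π (u * x) = π x := by
  obtain ⟨c, rfl⟩ := hsurj x
  rw [laurentSum, Finsupp.mul_sum, map_finsuppSum, map_finsuppSum]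
  refine Finsupp.sum_congr fun i _ => ?_
  rw [units_mul_ι_mul_zpow hcomm, hπ, hπ, phiZ_pow_char, neg_add, neg_add_cancel_right]

theorem ι_mul_zpow_sub_mem_range (hcomm : ∀ a : R, (u : A) * ι a = ι (a ^ p) * u)
    (i : ℤ) (a : R) :
    ι a * ((u ^ i : Aˣ) : A) - ι (phiZ p R (-i) a) ∈
      (AddMonoidHom.mulLeft ((u : A) - 1)).range := by
  set S := (AddMonoidHom.mulLeft ((u : A) - 1)).range
  have step : ∀ (j : ℤ) (b : R),
      (ι (b ^ p) * ((u ^ (j + 1) : Aˣ) : A) - ι (phiZ p R (-(j + 1)) (b ^ p))) -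
        (ι b * ((u ^ j : Aˣ) : A) - ι (phiZ p R (-j) b)) ∈ S := by
    intro j b
    refine ⟨ι b * ((u ^ j : Aˣ) : A), ?_⟩
    rw [AddMonoidHom.coe_mulLeft, units_sub_one_mul_ι_mul_zpow hcomm, phiZ_pow_char,
      neg_add, neg_add_cancel_right]
    abel
  induction i using Int.induction_on generalizing a with
  | zero => simp [phiZ_zero_apply]
  | succ i ih =>
    obtain ⟨b, rfl⟩ := surjective_frobenius R p a
    simpa only [frobenius_def, sub_add_cancel] using add_mem (step i b) (ih b)
  | pred i ih =>
    have h := step (-i - 1) a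
    rw [sub_add_cancel] at h
    simpa only [sub_sub_cancel] using sub_mem (ih (a ^ p)) h

theorem sub_ι_map_mem_range (hcomm : ∀ a : R, (u : A) * ι a = ι (a ^ p) * u)
    (hsurj : Function.Surjective (laurentSum ι u)) (π : A →+ R)
    (hπ : ∀ (a : R) (i : ℤ), π (ι a * ((u ^ i : Aˣ) : A)) = phiZ p R (-i) a) (x : A) :
    x - ι (π x) ∈ (AddMonoidHom.mulLeft ((u : A) - 1)).range := by
  obtain ⟨c, rfl⟩ := hsurj x
  rw [laurentSum, map_finsuppSum, map_finsuppSum, ← Finsupp.sum_sub]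
  refine sum_mem fun i _ => ?_
  dsimp only
  rw [hπ]
  exact ι_mul_zpow_sub_mem_range hcomm i (c i)

end Perfect

/-- Let `R` be a perfect commutative ring of characteristic `p`.  We encode the
twisted Laurent polynomial ring `R[F^{±1}]` abstractly: a ring `A`, a ring map `ι : R → A`,
and a unit `u` (playing the role of `F`) with `F·a = a^p·F`, such that `A` is free as a left
`R`-module on the powers `F^i, i ∈ ℤ`.  The map `π : A → R`, `Σ aᵢ F^i ↦ Σ aᵢ^{p^{-i}}`, is
hypothesized via its defining property.  Conclusion: left multiplication by `F - 1` is
injective, `π` is surjective, and `ker π` is exactly the image of left multiplication by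
`F - 1`; i.e. `0 → R[F^{±1}] →(F−1)· R[F^{±1}] →π R → 0` is a short exact sequence. -/
theorem stmt1 (p : ℕ) [Fact p.Prime] (R : Type*) [CommRing R] [CharP R p] [PerfectRing R p]
    (A : Type*) [Ring A] (ι : R →+* A) (u : Aˣ)
    (hcomm : ∀ a : R, (u : A) * ι a = ι (a ^ p) * u)
    (hbasis : Function.Bijective fun c : ℤ →₀ R => c.sum fun i a => ι a * ((u ^ i : Aˣ) : A))
    (π : A →+ R)
    (hπ : ∀ (a : R) (i : ℤ), π (ι a * ((u ^ i : Aˣ) : A)) = phiZ p R (-i) a) :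
    Function.Injective (fun x : A => ((u : A) - 1) * x) ∧
    Function.Surjective π ∧
    (∀ x : A, π x = 0 ↔ ∃ y : A, x = ((u : A) - 1) * y) := by
  have hsurj : Function.Surjective (laurentSum ι u) := hbasis.2
  refine ⟨?_, fun r => ⟨ι r, ?_⟩, fun x => ⟨fun hx => ?_, ?_⟩⟩
  · rw [← AddMonoidHom.coe_mulLeft, injective_iff_map_eq_zero]
    intro z hz
    obtain ⟨c, rfl⟩ := hsurj z
    rw [AddMonoidHom.coe_mulLeft, sub_mul, one_mul, sub_eq_zero] at hz
    rw [eq_zero_of_units_mul_eq_self hcomm hbasis.1 c hz, laurentSum, Finsupp.sum_zero_index]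
  · simpa [phiZ_zero_apply] using hπ r 0
  · obtain ⟨y, hy⟩ := sub_ι_map_mem_range hcomm hsurj π hπ x
    rw [hx, map_zero, sub_zero] at hy
    exact ⟨y, hy.symm⟩
  · rintro ⟨y, rfl⟩
    rw [sub_mul, one_mul, map_sub, map_units_mul_eq hcomm hsurj π hπ, sub_self]
end

section
/- Let R be a perfect F_p-algebra. If 0 → M' → M → M'' → 0 is a short exact sequence of R[F^{±1}]-modules, then M is algebraic if and only if both M' and M'' are algebraic. -/
/-!
Algebraicity of `x` means that `F^n x` lies in the `R`-span of `x, F x, …, F^{n-1} x` for some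
`n > 0`. Monic equations are transported along linear maps commuting with the operators, which
gives the easy direction. Conversely, if `g x` satisfies a monic equation `P(g x) = 0` of degree
`n`, then `y = P(x)` comes from `M'` and so satisfies one of some degree `m`. As `F` is additive
and semilinear, `F^k y` is `F^{n+k} x` plus an `R`-combination of lower iterates of `x`, hence
`F^{n+m} x` lies in the span of `x, …, F^{n+m-1} x`.
-/

/-- An element `x` of a module `M` over `R` equipped with a (Frobenius-semilinear) operator
`F : M → M` is *algebraic* if it satisfies a monic equation
`F^n x + a₁ F^{n-1} x + ⋯ + aₙ x = 0` with `aᵢ ∈ R`. -/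
def IsAlgebraicElt (R : Type*) {M : Type*} [CommRing R] [AddCommGroup M] [Module R M]
    (F : M → M) (x : M) : Prop :=
  ∃ n, 0 < n ∧ ∃ a : Fin n → R, F^[n] x + ∑ i : Fin n, a i • F^[n - 1 - i.1] x = 0

section TwistedEval

variable {R M N : Type*} [CommRing R] [AddCommGroup M] [Module R M]
  [AddCommGroup N] [Module R N]

def twistedEval (F : M → M) {n : ℕ} (a : Fin n → R) (x : M) : M :=
  F^[n] x + ∑ i : Fin n, a i • F^[n - 1 - i.1] x

theorem LinearMap.map_twistedEval (φ : M →ₗ[R] N) {G : M → M} {F : N → N}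
    (h : Function.Semiconj φ G F) {n : ℕ} (a : Fin n → R) (x : M) :
    φ (twistedEval G a x) = twistedEval F a (φ x) := by
  simp only [twistedEval, map_add, map_sum, map_smul, fun k => h.iterate_right k x]

theorem IsAlgebraicElt.map (φ : M →ₗ[R] N) {G : M → M} {F : N → N}
    (h : Function.Semiconj φ G F) {x : M} (hx : IsAlgebraicElt R G x) :
    IsAlgebraicElt R F (φ x) := by
  obtain ⟨n, hn, a, ha⟩ := hx
  refine ⟨n, hn, a, ?_⟩
  change twistedEval F a (φ x) = 0
  rw [← φ.map_twistedEval h, twistedEval, ha, map_zero]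

theorem IsAlgebraicElt.of_map {φ : M →ₗ[R] N} (hφ : Function.Injective φ) {G : M → M}
    {F : N → N} (h : Function.Semiconj φ G F) {x : M} (hx : IsAlgebraicElt R F (φ x)) :
    IsAlgebraicElt R G x := by
  obtain ⟨n, hn, a, ha⟩ := hx
  refine ⟨n, hn, a, hφ ?_⟩
  rw [← twistedEval, φ.map_twistedEval h, twistedEval, ha, map_zero]

variable (R) in
def iterateSpan (F : M → M) (x : M) (n : ℕ) : Submodule R M :=
  Submodule.span R (Set.range fun i : Fin n => F^[i] x)

theorem iterate_mem_iterateSpan (F : M → M) (x : M) {k n : ℕ} (hk : k < n) :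
    F^[k] x ∈ iterateSpan R F x n :=
  Submodule.subset_span ⟨⟨k, hk⟩, rfl⟩

theorem iterateSpan_iterate_le (F : M → M) (x : M) {k n N : ℕ} (h : k + n ≤ N) :
    iterateSpan R F (F^[k] x) n ≤ iterateSpan R F x N := by
  refine Submodule.span_le.2 (Set.range_subset_iff.2 fun i => ?_)
  rw [← Function.iterate_add_apply]
  exact iterate_mem_iterateSpan F x (by omega)

theorem twistedEval_sub_iterate_mem_iterateSpan (F : M → M) {n : ℕ} (a : Fin n → R) (x : M) :
    twistedEval F a x - F^[n] x ∈ iterateSpan R F x n := by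
  rw [twistedEval, add_sub_cancel_left]
  exact Submodule.sum_mem _ fun i _ =>
    Submodule.smul_mem _ _ (iterate_mem_iterateSpan F x (by omega))

theorem isAlgebraicElt_iff_iterate_mem_iterateSpan (F : M → M) (x : M) :
    IsAlgebraicElt R F x ↔ ∃ n, 0 < n ∧ F^[n] x ∈ iterateSpan R F x n := by
  constructor
  · rintro ⟨n, hn, a, ha⟩
    refine ⟨n, hn, ?_⟩
    have h := twistedEval_sub_iterate_mem_iterateSpan F a x
    rwa [twistedEval, ha, zero_sub, neg_mem_iff] at h
  · rintro ⟨n, hn, hmem⟩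
    obtain ⟨c, hc⟩ := (Submodule.mem_span_range_iff_exists_fun R).1 hmem
    refine ⟨n, hn, fun i => -c i.rev, ?_⟩
    have hrev : ∑ i : Fin n, c i.rev • F^[n - 1 - i.1] x = ∑ i : Fin n, c i • F^[i.1] x :=
      Fintype.sum_bijective Fin.rev Fin.rev_bijective _ _ fun i => by
        rw [Fin.val_rev, show n - (i.1 + 1) = n - 1 - i.1 by omega]
    simp only [neg_smul, Finset.sum_neg_distrib, hrev, hc, add_neg_cancel]

end TwistedEval

section Semilinear

variable {R M : Type*} [CommRing R] [AddCommGroup M] [Module R M] {p : ℕ} {F : M → M}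
  (hadd : ∀ x y, F (x + y) = F x + F y) (hsemi : ∀ (a : R) (m : M), F (a • m) = a ^ p • F m)
include hadd hsemi

theorem map_twistedEval_of_semilinear {n : ℕ} (a : Fin n → R) (x : M) :
    F (twistedEval F a x) = twistedEval F (fun i => a i ^ p) (F x) := by
  have hsum : ∀ v : Fin n → M, F (∑ i, v i) = ∑ i, F (v i) :=
    fun v => map_sum (AddMonoidHom.mk' F hadd) v _
  simp only [twistedEval, hadd, hsum, hsemi, Function.Commute.self_iterate F _ x]

theorem iterate_twistedEval (k : ℕ) {n : ℕ} (a : Fin n → R) (x : M) :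
    F^[k] (twistedEval F a x) = twistedEval F (fun i => a i ^ p ^ k) (F^[k] x) := by
  induction k with
  | zero => simp
  | succ k ih =>
    simp only [Function.iterate_succ_apply', ih, map_twistedEval_of_semilinear hadd hsemi,
      ← pow_mul, ← pow_succ]

theorem IsAlgebraicElt.of_twistedEval {n : ℕ} (a : Fin n → R) (x : M)
    (hy : IsAlgebraicElt R F (twistedEval F a x)) : IsAlgebraicElt R F x := by
  set y := twistedEval F a x
  obtain ⟨m, hm, hym⟩ := (isAlgebraicElt_iff_iterate_mem_iterateSpan F y).1 hy
  set N := iterateSpan R F x (n + m)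
  have htail : ∀ k ≤ m, F^[k] y - F^[n + k] x ∈ N := fun k hk => by
    rw [iterate_twistedEval hadd hsemi, Function.iterate_add_apply]
    exact iterateSpan_iterate_le F x (by omega) (twistedEval_sub_iterate_mem_iterateSpan F _ _)
  have hlow : iterateSpan R F y m ≤ N := by
    refine Submodule.span_le.2 (Set.range_subset_iff.2 fun k => ?_)
    have h := add_mem (htail k k.2.le) (iterate_mem_iterateSpan F x (by omega : n + k < n + m))
    rwa [sub_add_cancel] at h
  refine (isAlgebraicElt_iff_iterate_mem_iterateSpan F x).2 ⟨n + m, by omega, ?_⟩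
  have h := sub_mem (hlow hym) (htail m le_rfl)
  rwa [sub_sub_cancel] at h

end Semilinear

theorem stmt3_general (p : ℕ) (R M' M M'' : Type*) [CommRing R]
    [AddCommGroup M'] [Module R M'] [AddCommGroup M] [Module R M]
    [AddCommGroup M''] [Module R M'']
    (F' : M' → M') (F : M → M) (F'' : M'' → M'')
    (hFadd : ∀ x y, F (x + y) = F x + F y)
    (hFsemi : ∀ (a : R) (m : M), F (a • m) = a ^ p • F m)
    (f : M' →ₗ[R] M) (g : M →ₗ[R] M'')
    (hfF : ∀ x, f (F' x) = F (f x)) (hgF : ∀ x, g (F x) = F'' (g x))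
    (hfinj : Function.Injective f) (hgsurj : Function.Surjective g)
    (hexact : ∀ x : M, g x = 0 ↔ x ∈ LinearMap.range f) :
    (∀ x : M, IsAlgebraicElt R F x) ↔
      ((∀ x : M', IsAlgebraicElt R F' x) ∧ (∀ x : M'', IsAlgebraicElt R F'' x)) := by
  constructor
  · intro h
    refine ⟨fun x' => (h (f x')).of_map hfinj hfF, fun x'' => ?_⟩
    obtain ⟨x, rfl⟩ := hgsurj x''
    exact (h x).map g hgF
  · rintro ⟨h', h''⟩ x
    obtain ⟨n, -, a, ha⟩ := h'' (g x)
    obtain ⟨z, hz⟩ := (hexact (twistedEval F a x)).1 (by rwa [g.map_twistedEval hgF])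
    exact .of_twistedEval hFadd hFsemi a x (hz ▸ (h' z).map f hfF)

/-- Let `R` be a perfect `F_p`-algebra.  If `0 → M' → M → M'' → 0` is a short
exact sequence of `R[F^{±1}]`-modules (encoded as `R`-modules with additive, bijective,
Frobenius-semilinear operators, and `R`-linear maps commuting with the operators, with `f`
injective, `g` surjective, and `ker g = im f`), then `M` is algebraic if and only if both
`M'` and `M''` are algebraic. -/
theorem stmt3 (p : ℕ) [Fact p.Prime] (R M' M M'' : Type*) [CommRing R] [CharP R p]
    [PerfectRing R p]
    [AddCommGroup M'] [Module R M'] [AddCommGroup M] [Module R M]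
    [AddCommGroup M''] [Module R M'']
    (F' : M' → M') (F : M → M) (F'' : M'' → M'')
    (hF'add : ∀ x y, F' (x + y) = F' x + F' y)
    (hF'semi : ∀ (a : R) (m : M'), F' (a • m) = a ^ p • F' m)
    (hF'bij : Function.Bijective F')
    (hFadd : ∀ x y, F (x + y) = F x + F y)
    (hFsemi : ∀ (a : R) (m : M), F (a • m) = a ^ p • F m)
    (hFbij : Function.Bijective F)
    (hF''add : ∀ x y, F'' (x + y) = F'' x + F'' y)
    (hF''semi : ∀ (a : R) (m : M''), F'' (a • m) = a ^ p • F'' m)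
    (hF''bij : Function.Bijective F'')
    (f : M' →ₗ[R] M) (g : M →ₗ[R] M'')
    (hfF : ∀ x, f (F' x) = F (f x)) (hgF : ∀ x, g (F x) = F'' (g x))
    (hfinj : Function.Injective f) (hgsurj : Function.Surjective g)
    (hexact : ∀ x : M, g x = 0 ↔ x ∈ LinearMap.range f) :
    (∀ x : M, IsAlgebraicElt R F x) ↔
      ((∀ x : M', IsAlgebraicElt R F' x) ∧ (∀ x : M'', IsAlgebraicElt R F'' x)) :=
  stmt3_general p R M' M M'' F' F F'' hFadd hFsemi f g hfF hgF hfinj hgsurj hexact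
end

section
/- Let R be a perfect F_p-algebra and T = F^n + a₁F^{n-1} + ⋯ + aₙ a monic element of R[F^{±1}] with aᵢ ∈ R. Then the cyclic left module R[F^{±1}]/R[F^{±1}]·T is algebraic, i.e., every element satisfies a monic polynomial equation in F with coefficients in R. -/
/-!
Let `e` be the class of `1` in `M = A ⧸ A·T`. Since `T • e = 0`, the relation
`F^n e = -∑ aᵢ F^{n-1-i} e` rewrites every `F^j e` (`j ≥ 0`) as a combination of
`e, F e, …, F^{n-1} e` with coefficients in any subring `R₀ ⊆ R` containing the `aᵢ`: moving
`F^{j-n}` past `aᵢ` only raises it to a `p`-power. Write `x = ∑ cᵢ F^i` (`i ∈ ℤ`); after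
multiplication by a large power `F^k` only nonnegative powers remain, so all `F^j F^k x • e` lie
in the `R₀`-span `N` of `e, …, F^{n-1} e`. Taking for `R₀` the subring generated by the `aᵢ`
and the `cᵢ`, which is Noetherian by Hilbert's basis theorem, `N` is a Noetherian module, so the
chain of spans of the `F^j F^k x • e` stabilises: some `F^m F^k x • e` is an `R₀`-combination of
the earlier ones, a monic relation of degree `m + k` for `x` modulo `A·T`.
-/

open Finset Submodule

section NoetherianSequence

variable {S M : Type*} [Ring S] [AddCommGroup M] [Module S M]

theorem Submodule.exists_eq_sum_smul_of_isNoetherian (N : Submodule S M) [IsNoetherian S N]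
    (f : ℕ → M) (hf : ∀ j, f j ∈ N) :
    ∃ m, 0 < m ∧ ∃ c : Fin m → S, f m = ∑ i, c i • f i := by
  let g : ℕ → N := fun j => ⟨f j, hf j⟩
  let F : ℕ →o Submodule S N :=
    ⟨fun m => span S (Set.range fun i : Fin m => g i), fun _ _ hab =>
      span_mono (by rintro _ ⟨i, rfl⟩; exact ⟨Fin.castLE hab i, rfl⟩)⟩
  obtain ⟨m₀, hm₀⟩ := monotone_stabilizes_iff_noetherian.mpr ‹_› F
  have hmem : g (m₀ + 1) ∈ F (m₀ + 2) := subset_span ⟨Fin.last (m₀ + 1), rfl⟩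
  rw [← hm₀ (m₀ + 2) (by omega), hm₀ (m₀ + 1) (by omega)] at hmem
  obtain ⟨c, hc⟩ := (mem_span_range_iff_exists_fun S).mp hmem
  refine ⟨m₀ + 1, m₀.succ_pos, c, ?_⟩
  simpa [g] using congrArg Subtype.val hc.symm

end NoetherianSequence

section TwistedLaurent

variable {R A : Type*} [CommRing R] [Ring A] {p : ℕ} {ι : R →+* A} {u : Aˣ}

theorem pow_mul_map_eq_map_pow_mul (hcomm : ∀ a : R, (u : A) * ι a = ι (a ^ p) * u)
    (k : ℕ) (a : R) : (u : A) ^ k * ι a = ι (a ^ p ^ k) * (u : A) ^ k := by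
  induction k with
  | zero => simp
  | succ k ih =>
    rw [pow_succ', mul_assoc, ih, ← mul_assoc, hcomm, mul_assoc, ← pow_succ', ← pow_mul,
      ← pow_succ]

theorem pow_mul_zpow_eq_pow_toNat (k : ℕ) (i : ℤ) (h : 0 ≤ k + i) :
    (u : A) ^ k * ((u ^ i : Aˣ) : A) = (u : A) ^ (k + i).toNat := by
  rw [← Units.val_pow_eq_pow_val, ← Units.val_mul, ← zpow_natCast, ← zpow_add,
    ← Int.toNat_of_nonneg h, zpow_natCast, Units.val_pow_eq_pow_val, Int.toNat_natCast]

theorem pow_mul_add_sum_mul_pow_mul_eq_append (m k : ℕ) (a : Fin m → R) (x : A) :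
    (u : A) ^ m * ((u : A) ^ k * x)
        + ∑ i : Fin m, ι (a i) * (u : A) ^ (m - 1 - i.1) * ((u : A) ^ k * x)
      = (u : A) ^ (m + k) * x
        + ∑ i : Fin (m + k), ι (Fin.append a 0 i) * (u : A) ^ (m + k - 1 - i.1) * x := by
  rw [Fin.sum_univ_add]
  simp only [Fin.append_left, Fin.append_right, Pi.zero_apply, map_zero, zero_mul,
    sum_const_zero, add_zero, ← mul_assoc, ← pow_add, Fin.val_castAdd]
  congr 1
  refine sum_congr rfl fun i _ => ?_
  rw [mul_assoc (ι (a i)), ← pow_add, show m - 1 - i.1 + k = m + k - 1 - i.1 by omega]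

theorem sum_map_rev_mul_pow_sub_mul (m : ℕ) (c : Fin m → R) (y : A) :
    ∑ i : Fin m, ι (c i.rev) * (u : A) ^ (m - 1 - i.1) * y
      = ∑ i : Fin m, ι (c i) * (u : A) ^ i.1 * y := by
  refine Fintype.sum_equiv Fin.revPerm _ _ fun i => ?_
  simp only [Fin.revPerm_apply, Fin.val_rev]
  congr 3
  omega

variable {M : Type*} [AddCommGroup M] [Module A M]

theorem pow_smul_mem_span_of_smul_eq_zero [Module R M]
    (hcomm : ∀ a : R, (u : A) * ι a = ι (a ^ p) * u)
    (hsmul : ∀ (r : R) (z : M), r • z = ι r • z) {n : ℕ} (c : Fin n → R) {T : A}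
    (hT : T = (u : A) ^ n + ∑ i : Fin n, ι (c i) * (u : A) ^ (n - 1 - i.1))
    {e : M} (he : T • e = 0) (j : ℕ) :
    (u : A) ^ j • e ∈ span R (Set.range fun t : Fin n => (u : A) ^ t.1 • e) := by
  induction j using Nat.strong_induction_on with
  | _ j ih =>
  by_cases hj : j < n
  · exact subset_span ⟨⟨j, hj⟩, rfl⟩
  have hun : (u : A) ^ n • e = -∑ i : Fin n, (ι (c i) * (u : A) ^ (n - 1 - i.1)) • e := by
    rw [← sum_smul, eq_neg_iff_add_eq_zero, ← add_smul, ← hT, he]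
  have hterm : ∀ i : Fin n, (u : A) ^ (j - n) • (ι (c i) * (u : A) ^ (n - 1 - i.1)) • e
      = (c i ^ p ^ (j - n)) • (u : A) ^ (j - 1 - i.1) • e := by
    intro i
    rw [← mul_smul, ← mul_assoc, pow_mul_map_eq_map_pow_mul hcomm, mul_assoc, ← pow_add, hsmul,
      mul_smul]
    congr 3
    omega
  rw [show j = (j - n) + n by omega, pow_add, mul_smul, hun, smul_neg, smul_sum]
  simp only [hterm]
  exact neg_mem (sum_mem fun i _ => smul_mem _ _ (ih _ (by omega)))

theorem exists_pow_mul_smul_mem_span [Module R M]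
    (hcomm : ∀ a : R, (u : A) * ι a = ι (a ^ p) * u)
    (hsmul : ∀ (r : R) (z : M), r • z = ι r • z) {n : ℕ} (c : Fin n → R) {T : A}
    (hT : T = (u : A) ^ n + ∑ i : Fin n, ι (c i) * (u : A) ^ (n - 1 - i.1))
    {e : M} (he : T • e = 0) (s : Finset ℤ) (d : ℤ → R) :
    ∃ k : ℕ, ∀ j, ((u : A) ^ j * ((u : A) ^ k * ∑ i ∈ s, ι (d i) * ((u ^ i : Aˣ) : A))) • e ∈
      span R (Set.range fun t : Fin n => (u : A) ^ t.1 • e) := by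
  refine ⟨s.sup Int.natAbs, fun j => ?_⟩
  rw [← mul_assoc, ← pow_add, mul_sum, sum_smul]
  refine sum_mem fun i hi => ?_
  have hi' : 0 ≤ ((j + s.sup Int.natAbs : ℕ) : ℤ) + i := by
    have := le_sup (f := Int.natAbs) hi
    omega
  rw [← mul_assoc, pow_mul_map_eq_map_pow_mul hcomm, mul_assoc, pow_mul_zpow_eq_pow_toNat _ _ hi',
    mul_smul, ← hsmul]
  exact smul_mem _ _ (pow_smul_mem_span_of_smul_eq_zero hcomm hsmul c hT he _)

theorem exists_monic_smul_eq_zero [IsNoetherianRing R]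
    (hcomm : ∀ a : R, (u : A) * ι a = ι (a ^ p) * u) {n : ℕ} (c : Fin n → R) {T : A}
    (hT : T = (u : A) ^ n + ∑ i : Fin n, ι (c i) * (u : A) ^ (n - 1 - i.1))
    {e : M} (he : T • e = 0) (s : Finset ℤ) (d : ℤ → R) {x : A}
    (hx : x = ∑ i ∈ s, ι (d i) * ((u ^ i : Aˣ) : A)) :
    ∃ m, 0 < m ∧ ∃ a : Fin m → R,
      ((u : A) ^ m * x + ∑ i : Fin m, ι (a i) * (u : A) ^ (m - 1 - i.1) * x) • e = 0 := by
  let : Module R M := Module.compHom M ι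
  have hsmul : ∀ (r : R) (z : M), r • z = ι r • z := fun _ _ => rfl
  let N := span R (Set.range fun t : Fin n => (u : A) ^ t.1 • e)
  have : IsNoetherian R N := isNoetherian_of_fg_of_noetherian N (fg_span (Set.finite_range _))
  obtain ⟨k, hk⟩ := exists_pow_mul_smul_mem_span hcomm hsmul c hT he s d
  obtain ⟨m, hm, b, hb⟩ := N.exists_eq_sum_smul_of_isNoetherian _ hk
  rw [← hx] at hb
  refine ⟨m + k, by omega, Fin.append (fun i => -b i.rev) 0, ?_⟩
  rw [← pow_mul_add_sum_mul_pow_mul_eq_append]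
  simp only [map_neg, neg_mul, sum_neg_distrib]
  rw [sum_map_rev_mul_pow_sub_mul, ← sub_eq_add_neg, sub_smul, sum_smul, hb, sub_eq_zero]
  refine sum_congr rfl fun i _ => ?_
  rw [hsmul, ← mul_smul, mul_assoc]

theorem exists_monic_mul_eq_mul_of_isNoetherianRing [IsNoetherianRing R]
    (hcomm : ∀ a : R, (u : A) * ι a = ι (a ^ p) * u) {n : ℕ} (c : Fin n → R) {T : A}
    (hT : T = (u : A) ^ n + ∑ i : Fin n, ι (c i) * (u : A) ^ (n - 1 - i.1))
    (s : Finset ℤ) (d : ℤ → R) {x : A} (hx : x = ∑ i ∈ s, ι (d i) * ((u ^ i : Aˣ) : A)) :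
    ∃ m, 0 < m ∧ ∃ a : Fin m → R, ∃ b : A,
      (u : A) ^ m * x + ∑ i : Fin m, ι (a i) * (u : A) ^ (m - 1 - i.1) * x = b * T := by
  have hmk : ∀ y : A, y • (Submodule.Quotient.mk 1 : A ⧸ span A {T}) = Submodule.Quotient.mk y :=
    fun y => by rw [← Quotient.mk_smul, smul_eq_mul, mul_one]
  have he : T • (Submodule.Quotient.mk 1 : A ⧸ span A {T}) = 0 := by
    rw [hmk, Quotient.mk_eq_zero]
    exact mem_span_singleton_self T
  obtain ⟨m, hm, a, ha⟩ := exists_monic_smul_eq_zero hcomm c hT he s d hx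
  rw [hmk, Quotient.mk_eq_zero, mem_span_singleton] at ha
  obtain ⟨b, hb⟩ := ha
  exact ⟨m, hm, a, b, hb.symm⟩

end TwistedLaurent

theorem stmt5_general (p : ℕ) (R : Type*) [CommRing R]
    (A : Type*) [Ring A] (ι : R →+* A) (u : Aˣ)
    (hcomm : ∀ a : R, (u : A) * ι a = ι (a ^ p) * u)
    (hbasis : Function.Bijective fun c : ℤ →₀ R => c.sum fun i a => ι a * ((u ^ i : Aˣ) : A))
    (n : ℕ) (c : Fin n → R) (T : A)
    (hT : T = (u : A) ^ n + ∑ i : Fin n, ι (c i) * (u : A) ^ (n - 1 - i.1)) :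
    ∀ x : A, ∃ m, 0 < m ∧ ∃ a : Fin m → R, ∃ b : A,
      (u : A) ^ m * x + ∑ i : Fin m, ι (a i) * (u : A) ^ (m - 1 - i.1) * x = b * T := by
  intro x
  obtain ⟨d, rfl⟩ := hbasis.surjective x
  let R₀ := Algebra.adjoin ℤ (Set.range d ∪ Set.range c)
  have hR₀ : ∀ r ∈ Set.range d ∪ Set.range c, r ∈ R₀ := fun _ h => Algebra.subset_adjoin h
  have : Algebra.FiniteType ℤ R₀ := (Subalgebra.fg_iff_finiteType R₀).mp
    (Subalgebra.fg_def.mpr ⟨_, d.finite_range.union (Set.finite_range c), rfl⟩)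
  have : IsNoetherianRing R₀ := Algebra.FiniteType.isNoetherianRing ℤ R₀
  obtain ⟨m, hm, a, b, h⟩ := exists_monic_mul_eq_mul_of_isNoetherianRing
    (ι := ι.comp (algebraMap R₀ R)) (fun r => hcomm r) (fun i => ⟨c i, hR₀ _ (.inr ⟨i, rfl⟩)⟩) hT
    d.support (fun i => ⟨d i, hR₀ _ (.inl ⟨i, rfl⟩)⟩) rfl
  exact ⟨m, hm, fun i => a i, b, h⟩

/-- Let `R` be a perfect `F_p`-algebra and `T = F^n + a₁F^{n-1} + ⋯ + aₙ` a
monic element of the twisted Laurent polynomial ring `R[F^{±1}]` (encoded abstractly as in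
the other statements: a ring `A` with `ι : R → A`, a unit `u` playing the role of `F`, the
twisted commutation rule, and freeness over `R` on the powers `F^i, i ∈ ℤ`).  Then the
cyclic left module `R[F^{±1}]/R[F^{±1}]·T` is algebraic: every element `x` (i.e. every coset
`x + R[F^{±1}]·T`) satisfies a monic polynomial equation in `F` with coefficients in `R`,
expressed by saying that `F^m x + Σ ι(aᵢ) F^{m-i} x` lies in the left ideal `R[F^{±1}]·T`,
i.e. equals `b * T` for some `b`. -/
theorem stmt5 (p : ℕ) [Fact p.Prime] (R : Type*) [CommRing R] [CharP R p] [PerfectRing R p]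
    (A : Type*) [Ring A] (ι : R →+* A) (u : Aˣ)
    (hcomm : ∀ a : R, (u : A) * ι a = ι (a ^ p) * u)
    (hbasis : Function.Bijective fun c : ℤ →₀ R => c.sum fun i a => ι a * ((u ^ i : Aˣ) : A))
    (n : ℕ) (hn : 0 < n) (c : Fin n → R) (T : A)
    (hT : T = (u : A) ^ n + ∑ i : Fin n, ι (c i) * (u : A) ^ (n - 1 - i.1)) :
    ∀ x : A, ∃ m, 0 < m ∧ ∃ a : Fin m → R, ∃ b : A,
      (u : A) ^ m * x + ∑ i : Fin m, ι (a i) * (u : A) ^ (m - 1 - i.1) * x = b * T :=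
  stmt5_general p R A ι u hcomm hbasis n c T hT
end

section
/- Let R be a perfect F_p-algebra and R → C a ring map with C perfect and integral over R. Then C, viewed as a left R[F^{±1}]-module with F acting by the Frobenius x ↦ x^p, is algebraic: every x ∈ C satisfies an equation F^n x + a₁F^{n-1}x + ⋯ + aₙx = 0 with aᵢ ∈ R, equivalently x^{p^n} + a₁x^{p^{n-1}} + ⋯ + aₙx = 0. -/
open Polynomial TensorProduct

/-- Auxiliary: over a ring of characteristic `p`, given a family of `k` "roots",
there is a monic additive polynomial `X^(p^k) + ∑ aᵢ X^(p^i)` divisible by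
`∏ (X - C (lam i))`. -/
lemma stmt6_aux_additive (p : ℕ) [Fact p.Prime] (S : Type*) [CommRing S] [CharP S p] :
    ∀ (k : ℕ) (lam : Fin k → S), ∃ a : ℕ → S,
      (∏ i, (X - C (lam i))) ∣
        (X ^ p ^ k + ∑ i ∈ Finset.range k, C (a i) * X ^ p ^ i) := by
  have hp : 0 < p := (Fact.out : p.Prime).pos
  have hcx : CharP S[X] p := charP_of_injective_ringHom (Polynomial.C_injective (R := S)) p
  intro k
  induction k with
  | zero => exact fun lam => ⟨0, by simp⟩
  | succ k ih =>
    intro lam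
    obtain ⟨a, hdvd⟩ := ih (fun i => lam i.castSucc)
    set E : S[X] := X ^ p ^ k + ∑ i ∈ Finset.range k, C (a i) * X ^ p ^ i with hEdef
    set μ : S := E.eval (lam (Fin.last k)) with hμ
    set a' : ℕ → S := fun j =>
      (if j = 0 then 0 else (a (j - 1)) ^ p) - μ ^ (p - 1) * (if j < k then a j else 1)
      with ha'
    refine ⟨a', ?_⟩
    have hshape : X ^ p ^ (k + 1) + ∑ j ∈ Finset.range (k + 1), C (a' j) * X ^ p ^ j
        = E ^ p - C (μ ^ (p - 1)) * E := by
      have h1 : E ^ p = X ^ p ^ (k + 1) +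
          ∑ i ∈ Finset.range k, C ((a i) ^ p) * X ^ p ^ (i + 1) := by
        rw [hEdef, add_pow_char, sum_pow_char]
        congr 1
        · rw [← pow_mul, ← pow_succ]
        · refine Finset.sum_congr rfl fun i _ => ?_
          rw [mul_pow, ← C_pow, ← pow_mul, ← pow_succ]
      have h2 : ∑ j ∈ Finset.range (k + 1),
            C ((if j = 0 then (0:S) else (a (j - 1)) ^ p)) * X ^ p ^ j
          = ∑ i ∈ Finset.range k, C ((a i) ^ p) * X ^ p ^ (i + 1) := by
        rw [Finset.sum_range_succ']
        simp
      have h3 : ∑ j ∈ Finset.range (k + 1),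
            C (μ ^ (p - 1) * (if j < k then a j else 1)) * X ^ p ^ j
          = C (μ ^ (p - 1)) * E := by
        rw [Finset.sum_range_succ, hEdef]
        rw [mul_add, Finset.mul_sum]
        rw [add_comm]
        congr 1
        · simp [mul_comm]
        · refine Finset.sum_congr rfl fun i hi => ?_
          rw [Finset.mem_range] at hi
          simp [hi, C_mul]
          ring
      calc X ^ p ^ (k + 1) + ∑ j ∈ Finset.range (k + 1), C (a' j) * X ^ p ^ j
          = X ^ p ^ (k + 1) +
            ((∑ j ∈ Finset.range (k + 1),
              C ((if j = 0 then (0:S) else (a (j - 1)) ^ p)) * X ^ p ^ j) -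
             (∑ j ∈ Finset.range (k + 1),
              C (μ ^ (p - 1) * (if j < k then a j else 1)) * X ^ p ^ j)) := by
            rw [← Finset.sum_sub_distrib]
            congr 1
            refine Finset.sum_congr rfl fun j _ => ?_
            rw [ha']
            simp [C_sub, sub_mul]
        _ = E ^ p - C (μ ^ (p - 1)) * E := by rw [h2, h3, h1]; ring
    rw [hshape]
    have hfact : E ^ p - C (μ ^ (p - 1)) * E = E * (E ^ (p - 1) - C (μ ^ (p - 1))) := by
      have : E * E ^ (p - 1) = E ^ p := by
        rw [← pow_succ']
        congr 1
        omega
      rw [mul_sub, this]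
      ring
    rw [hfact]
    have hroot : (X - C (lam (Fin.last k))) ∣ (E ^ (p - 1) - C (μ ^ (p - 1))) := by
      rw [dvd_iff_isRoot]
      simp [IsRoot, eval_sub, eval_pow, ← hμ]
    have hprod : (∏ i, (X - C (lam i)))
        = (∏ i : Fin k, (X - C (lam i.castSucc))) * (X - C (lam (Fin.last k))) := by
      rw [Fin.prod_univ_castSucc]
    rw [hprod]
    exact mul_dvd_mul hdvd hroot

/-- Auxiliary: a splitting tower for a monic polynomial: a (nontrivial) algebra `S`
with an `R`-linear retraction sending `1` to `1`, over which `f` splits into linear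
factors. -/
lemma stmt6_aux_tower (d : ℕ) : ∀ (R : Type u) [CommRing R] [Nontrivial R] (f : R[X]),
    f.Monic → f.natDegree = d →
    ∃ (S : Type u) (_ : CommRing S) (_ : Algebra R S) (_ : Nontrivial S)
      (π : S →ₗ[R] R) (lam : Fin d → S),
      π 1 = 1 ∧ f.map (algebraMap R S) = ∏ i, (X - C (lam i)) := by
  induction d with
  | zero =>
    intro R _ _ f hf hdeg
    refine ⟨R, ‹_›, Algebra.id R, ‹_›, LinearMap.id, fun i => i.elim0, rfl, ?_⟩
    have : f = 1 := Polynomial.eq_one_of_monic_natDegree_zero hf hdeg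
    simp [this]
  | succ d ih =>
    intro R _ _ f hf hdeg
    set S₁ := AdjoinRoot f with hS₁
    set hpb : PowerBasis R S₁ := AdjoinRoot.powerBasis' hf with hpbdef
    have hdim0 : 0 < hpb.dim := by
      rw [hpbdef, AdjoinRoot.powerBasis'_dim, hdeg]; omega
    have hnt : Nontrivial S₁ := by
      refine nontrivial_of_ne (hpb.basis ⟨0, hdim0⟩) 0 (hpb.basis.ne_zero _)
    set r := AdjoinRoot.root f with hr
    have hmapmonic : (f.map (algebraMap R S₁)).Monic := hf.map _
    have hrootdvd : (X - C r) ∣ f.map (algebraMap R S₁) := by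
      rw [dvd_iff_isRoot]
      rw [IsRoot, ← Polynomial.eval₂_eq_eval_map, AdjoinRoot.algebraMap_eq]
      exact AdjoinRoot.eval₂_root f
    obtain ⟨g, hg⟩ := hrootdvd
    have hgmonic : g.Monic := (monic_X_sub_C r).of_mul_monic_left (hg ▸ hmapmonic)
    have hgdeg : g.natDegree = d := by
      have h1 : (f.map (algebraMap R S₁)).natDegree = d + 1 := by
        rw [hf.natDegree_map]; exact hdeg
      rw [hg, (monic_X_sub_C r).natDegree_mul hgmonic, natDegree_X_sub_C] at h1
      omega
    obtain ⟨S, iC, iA, iN, π₁, lam', hπ₁, hmap'⟩ := ih S₁ g hgmonic hgdeg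
    letI : CommRing S := iC
    letI : Algebra S₁ S := iA
    letI : Algebra R S := ((algebraMap S₁ S).comp (algebraMap R S₁)).toAlgebra
    haveI : IsScalarTower R S₁ S := IsScalarTower.of_algebraMap_eq fun x => rfl
    set π₀ : S₁ →ₗ[R] R := hpb.basis.coord ⟨0, hdim0⟩ with hπ₀
    have hπ₀1 : π₀ 1 = 1 := by
      have hb : hpb.basis ⟨0, hdim0⟩ = 1 := by
        rw [hpb.basis_eq_pow]; exact pow_zero _
      rw [hπ₀, ← hb, Module.Basis.coord_apply, Module.Basis.repr_self, Finsupp.single_eq_same]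
    refine ⟨S, ‹_›, ‹_›, iN, π₀.comp (π₁.restrictScalars R),
      Fin.cons (algebraMap S₁ S r) lam', ?_, ?_⟩
    · simp [hπ₁, hπ₀1]
    · have : f.map (algebraMap R S) = (f.map (algebraMap R S₁)).map (algebraMap S₁ S) := by
        rw [Polynomial.map_map, ← IsScalarTower.algebraMap_eq]
      rw [this, hg, Polynomial.map_mul, hmap', Fin.prod_univ_succ]
      simp [Polynomial.map_sub, Fin.cons_succ]

/-- Let `R` be a perfect `F_p`-algebra and `R → C` a ring map with `C` perfect
and integral over `R`.  Then `C`, viewed as a left `R[F^{±1}]`-module with `F` acting by the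
Frobenius `x ↦ x^p`, is algebraic: every `x ∈ C` satisfies an equation
`x^{p^n} + a₁ x^{p^{n-1}} + ⋯ + aₙ x = 0` with `aᵢ ∈ R`. -/
theorem stmt6 (p : ℕ) [Fact p.Prime] (R C : Type*) [CommRing R] [CharP R p] [PerfectRing R p]
    [CommRing C] [CharP C p] [PerfectRing C p] [Algebra R C] [Algebra.IsIntegral R C] :
    ∀ x : C, ∃ n, 0 < n ∧ ∃ a : Fin n → R,
      x ^ p ^ n + ∑ i : Fin n, a i • x ^ p ^ (n - 1 - i.1) = 0 := by
  intro x
  by_cases htriv : Subsingleton C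
  · exact ⟨1, one_pos, 0, Subsingleton.elim _ _⟩
  have hC : Nontrivial C := not_subsingleton_iff_nontrivial.mp htriv
  have hR : Nontrivial R := by
    by_contra h
    have hs : Subsingleton R := not_nontrivial_iff_subsingleton.mp h
    have h10 : (0 : C) = 1 := by
      rw [← (algebraMap R C).map_one, ← (algebraMap R C).map_zero,
        Subsingleton.elim (0 : R) 1]
    exact htriv (subsingleton_of_zero_eq_one h10)
  obtain ⟨f₀, hf₀m, hf₀⟩ := Algebra.IsIntegral.isIntegral (R := R) x
  set f : R[X] := f₀ * X with hf
  have hfm : f.Monic := hf₀m.mul monic_X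
  set d := f₀.natDegree + 1 with hd
  have hfd : f.natDegree = d := by rw [hf, natDegree_mul_X hf₀m.ne_zero, hd]
  have hfx : (Polynomial.aeval x) f = 0 := by
    rw [hf, map_mul, aeval_X, aeval_def, hf₀, zero_mul]
  obtain ⟨S, iC, iA, iN, π, lam, hπ1, hmap⟩ := stmt6_aux_tower d R f hfm hfd
  letI := iC; letI := iA; haveI := iN
  haveI : CharP S p := by
    have hp0 : (p : S) = 0 := by
      rw [← map_natCast (algebraMap R S) p, CharP.cast_eq_zero, map_zero]
    exact (CharP.charP_iff_prime_eq_zero Fact.out).mpr hp0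
  obtain ⟨a, hdvd⟩ := stmt6_aux_additive p S d lam
  rw [← hmap] at hdvd
  obtain ⟨q, hq⟩ := hdvd
  set x' : S ⊗[R] C := 1 ⊗ₜ[R] x with hx'
  have hx'f : (Polynomial.aeval x') (f.map (algebraMap R S)) = 0 := by
    rw [aeval_map_algebraMap]
    have hxx : x' = Algebra.TensorProduct.includeRight (R := R) (A := S) x := rfl
    rw [hxx, Polynomial.aeval_algHom_apply, hfx, map_zero]
  have hEx : (Polynomial.aeval x')
      (X ^ p ^ d + ∑ i ∈ Finset.range d, Polynomial.C (a i) * X ^ p ^ i) = 0 := by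
    rw [hq, map_mul, hx'f, zero_mul]
  have hEx2 : (1 : S) ⊗ₜ[R] (x ^ p ^ d) +
      ∑ i ∈ Finset.range d, (a i) ⊗ₜ[R] (x ^ p ^ i) = 0 := by
    rw [map_add, map_sum] at hEx
    rw [← hEx]
    congr 1
    · rw [aeval_X_pow, hx', Algebra.TensorProduct.tmul_pow, one_pow]
    · refine Finset.sum_congr rfl fun i _ => ?_
      rw [map_mul, aeval_C, aeval_X_pow, hx', Algebra.TensorProduct.tmul_pow, one_pow,
        Algebra.TensorProduct.algebraMap_apply, Algebra.TensorProduct.tmul_mul_tmul,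
        mul_one, one_mul, Algebra.algebraMap_self_apply]
  set L : (S ⊗[R] C) →ₗ[R] C :=
    (TensorProduct.lid R C).toLinearMap ∘ₗ (π.rTensor C) with hLdef
  have hL : ∀ (s : S) (y : C), L (s ⊗ₜ[R] y) = π s • y := by
    intro s y
    rw [hLdef]
    simp [TensorProduct.lid_tmul]
  have hmain := congrArg L hEx2
  rw [map_add, map_sum, map_zero, hL, hπ1, one_smul] at hmain
  have hmain2 : x ^ p ^ d + ∑ i ∈ Finset.range d, π (a i) • x ^ p ^ i = 0 := hmain
  rw [Finset.sum_range (fun i => π (a i) • x ^ p ^ i)] at hmain2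
  refine ⟨d, by rw [hd]; exact Nat.succ_pos _, fun i => π (a (d - 1 - i.1)), ?_⟩
  have hsum : ∑ i : Fin d, π (a (d - 1 - i.1)) • x ^ p ^ (d - 1 - i.1)
      = ∑ j : Fin d, π (a j.1) • x ^ p ^ (j.1) := by
    refine Fintype.sum_equiv Fin.revPerm _ _ fun i => ?_
    have he : d - (i.1 + 1) = d - 1 - i.1 := by omega
    rw [Fin.revPerm_apply, Fin.val_rev, he]
  rw [hsum]
  exact hmain2
end

section
/- Let (R', I) be a henselian pair with R' a perfect F_p-algebra, and let a₁, …, aₙ ∈ R'. Then the map I → I given by x ↦ x + a₁x^p + a₂x^{p²} + ⋯ + aₙx^{pⁿ} is a bijection. -/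
open Polynomial Finset

/-- In a ring with `I ≤ Jacobson ⊥`, `1 + j` is a unit for `j ∈ I`. -/
lemma stmt7_aux_unit {R : Type*} [CommRing R] {I : Ideal R} (hI : I ≤ Ideal.jacobson ⊥)
    {j : R} (hj : j ∈ I) : IsUnit (1 + j) := by
  have := (Ideal.mem_jacobson_bot.mp (hI hj)) 1
  simpa [add_comm] using this

/-- Let `(R', I)` be a henselian pair with `R'` a perfect `F_p`-algebra, and
let `a₁, …, aₙ ∈ R'`.  Then the map `I → I` given by
`x ↦ x + a₁ x^p + a₂ x^{p²} + ⋯ + aₙ x^{pⁿ}` is a bijection. -/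
theorem stmt7 (p n : ℕ) [Fact p.Prime] (R' : Type*) [CommRing R'] [CharP R' p]
    [PerfectRing R' p] (I : Ideal R') [HenselianRing R' I] (a : Fin n → R') :
    Set.BijOn (fun x : R' => x + ∑ i : Fin n, a i * x ^ p ^ (i.1 + 1))
      (I : Set R') (I : Set R') := by
  have hp : p.Prime := Fact.out
  have hjac : I ≤ Ideal.jacobson ⊥ := HenselianRing.jac
  have hd1 : ∀ i : Fin n, 1 ≤ p ^ (i.1 + 1) := fun i => Nat.one_le_pow _ _ hp.pos
  refine ⟨?_, ?_, ?_⟩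
  · -- MapsTo
    intro x hx
    exact I.add_mem hx (Ideal.sum_mem I fun i _ =>
      I.mul_mem_left (a i) (Ideal.pow_mem_of_mem I hx _ (Nat.one_le_pow _ _ hp.pos)))
  · -- InjOn
    intro x hx y hy h
    simp only at h
    set s := x - y with hs
    have hsI : s ∈ I := I.sub_mem hx hy
    have key : s * (1 + ∑ i : Fin n, a i * s ^ (p ^ (i.1 + 1) - 1)) = 0 := by
      have hsum : ∀ i : Fin n, s * (a i * s ^ (p ^ (i.1 + 1) - 1))
          = a i * x ^ p ^ (i.1 + 1) - a i * y ^ p ^ (i.1 + 1) := by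
        intro i
        have h1 : s * s ^ (p ^ (i.1 + 1) - 1) = s ^ p ^ (i.1 + 1) := by
          rw [← pow_succ']
          congr 1
          have := hd1 i
          omega
        have h2 : s ^ p ^ (i.1 + 1) = x ^ p ^ (i.1 + 1) - y ^ p ^ (i.1 + 1) := by
          rw [hs]; exact sub_pow_char_pow x y _
        calc s * (a i * s ^ (p ^ (i.1 + 1) - 1))
            = a i * (s * s ^ (p ^ (i.1 + 1) - 1)) := by ring
          _ = a i * x ^ p ^ (i.1 + 1) - a i * y ^ p ^ (i.1 + 1) := by
              rw [h1, h2]; ring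
      rw [mul_add, mul_one, Finset.mul_sum]
      rw [Finset.sum_congr rfl fun i _ => hsum i, Finset.sum_sub_distrib]
      rw [hs]
      linear_combination h
    have hu : IsUnit (1 + ∑ i : Fin n, a i * s ^ (p ^ (i.1 + 1) - 1)) := by
      refine stmt7_aux_unit hjac (Ideal.sum_mem I fun i _ => I.mul_mem_left (a i) ?_)
      refine Ideal.pow_mem_of_mem I hsI _ ?_
      have h2 : p ≤ p ^ (i.1 + 1) := Nat.le_self_pow (by omega) p
      have := hp.two_le
      omega
    have : s = 0 := by
      obtain ⟨u, hu'⟩ := hu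
      have := congrArg (· * (↑u⁻¹ : R')) key
      simpa [← hu', mul_assoc] using this
    rw [hs] at this
    exact sub_eq_zero.mp this
  · -- SurjOn
    intro t ht
    set D := p ^ n with hD
    have hD1 : 1 ≤ D := Nat.one_le_pow _ _ hp.pos
    have hdD : ∀ i : Fin n, p ^ (i.1 + 1) ≤ D := fun i =>
      Nat.pow_le_pow_right hp.pos (by omega)
    set c : Fin n → R' := fun i => a i * t ^ (p ^ (i.1 + 1) - 1) with hc
    have hcI : ∀ i : Fin n, c i ∈ I := fun i =>
      I.mul_mem_left (a i) (Ideal.pow_mem_of_mem I ht _ (by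
        have h2 : p ≤ p ^ (i.1 + 1) := Nat.le_self_pow (by omega) p
        have := hp.two_le; omega))
    set Q : R'[X] := X ^ (D - 1) + ∑ i : Fin n, C (c i) * X ^ (D - p ^ (i.1 + 1)) with hQ
    set G : R'[X] := X ^ D - Q with hG
    have hdegQ : Q.degree ≤ (D - 1 : ℕ) := by
      refine le_trans (degree_add_le _ _) (max_le (by simpa using degree_X_pow_le (D - 1)) ?_)
      refine le_trans (degree_sum_le _ _) (Finset.sup_le fun i _ => ?_)
      refine le_trans (degree_C_mul_X_pow_le _ _) ?_
      have hnat : D - p ^ (i.1 + 1) ≤ D - 1 := by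
        have := hd1 i; have := hdD i; omega
      exact_mod_cast hnat
    have hmonic : G.Monic := by
      rw [hG]
      refine monic_X_pow_sub (lt_of_le_of_lt hdegQ ?_)
      exact_mod_cast (by omega : D - 1 < D)
    have hcast : (D : R') - ((D - 1 : ℕ) : R') = 1 := by
      have h1 : ((D - (D - 1) : ℕ) : R') = (D : R') - ((D - 1 : ℕ) : R') :=
        Nat.cast_sub (by omega)
      rw [← h1, show D - (D - 1) = 1 by omega, Nat.cast_one]
    have heval1 : G.eval 1 ∈ I := by
      have hv : G.eval 1 = -∑ i : Fin n, c i := by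
        simp only [hG, hQ, eval_sub, eval_add, eval_pow, eval_X, one_pow, eval_finset_sum,
          eval_mul, eval_C, mul_one]
        ring
      rw [hv]
      exact I.neg_mem (Ideal.sum_mem I fun i _ => hcI i)
    have hderiv : IsUnit (Ideal.Quotient.mk I (G.derivative.eval 1)) := by
      have hGd : G.derivative.eval 1
          = (D : R') - (((D - 1 : ℕ) : R') + ∑ i : Fin n, c i * ((D - p ^ (i.1 + 1) : ℕ) : R')) := by
        simp only [hG, hQ, derivative_sub, derivative_add, derivative_X_pow, derivative_sum,
          derivative_C_mul, eval_sub, eval_add, eval_mul, eval_pow, eval_C, eval_X,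
          eval_finset_sum, one_pow, mul_one]
      have hval : G.derivative.eval 1 - 1 ∈ I := by
        have hv2 : G.derivative.eval 1 - 1 = -∑ i : Fin n, c i * ((D - p ^ (i.1 + 1) : ℕ) : R') := by
          rw [hGd]
          linear_combination hcast
        rw [hv2]
        exact I.neg_mem (Ideal.sum_mem I fun i _ => I.mul_mem_right _ (hcI i))
      have hmk : Ideal.Quotient.mk I (G.derivative.eval 1) = 1 := by
        have := (Ideal.Quotient.eq (I := I)).mpr hval
        simpa using this
      rw [hmk]
      exact isUnit_one
    obtain ⟨w, hroot, hw1⟩ := HenselianRing.is_henselian G hmonic 1 heval1 hderiv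
    have hwu : IsUnit w := by
      have hw : w = 1 + (w - 1) := by ring
      rw [hw]
      exact stmt7_aux_unit hjac hw1
    obtain ⟨ω, rfl⟩ := hwu
    set z : R' := ((ω⁻¹ : R'ˣ) : R') with hz
    have hωz : (ω : R') * z = 1 := by
      rw [hz, ← Units.val_mul, mul_inv_cancel, Units.val_one]
    have hpow : ∀ k, k ≤ D → (ω : R') ^ (D - k) * z ^ D = z ^ k := by
      intro k hk
      have hzz : z ^ D = z ^ (D - k) * z ^ k := by
        rw [← pow_add]
        congr 1
        exact (Nat.sub_add_cancel hk).symm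
      rw [hzz, ← mul_assoc, ← mul_pow, hωz, one_pow, one_mul]
    have hrooteq : (ω : R') ^ D
        = (ω : R') ^ (D - 1) + ∑ i : Fin n, c i * (ω : R') ^ (D - p ^ (i.1 + 1)) := by
      have hr : G.eval (ω : R') = 0 := hroot
      rw [hG, hQ] at hr
      simp only [eval_sub, eval_add, eval_pow, eval_X, eval_finset_sum, eval_mul, eval_C] at hr
      linear_combination hr
    have hωD : (ω : R') ^ D * z ^ D = 1 := by
      rw [← mul_pow, hωz, one_pow]
    have h1 : (ω : R') ^ (D - 1) * z ^ D = z := by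
      simpa using hpow 1 hD1
    have h2 : ∀ i : Fin n, c i * (ω : R') ^ (D - p ^ (i.1 + 1)) * z ^ D = c i * z ^ (p ^ (i.1 + 1)) := by
      intro i
      rw [mul_assoc, hpow _ (hdD i)]
    have expand : (ω : R') ^ D * z ^ D = z + ∑ i : Fin n, c i * z ^ (p ^ (i.1 + 1)) := by
      rw [hrooteq, add_mul, Finset.sum_mul, h1, Finset.sum_congr rfl fun i _ => h2 i]
    have hzeq : z + ∑ i : Fin n, c i * z ^ (p ^ (i.1 + 1)) = 1 := by
      rw [← expand, hωD]
    refine ⟨t * z, I.mul_mem_right z ht, ?_⟩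
    simp only
    have hts : ∀ i : Fin n, a i * (t * z) ^ (p ^ (i.1 + 1)) = t * (c i * z ^ (p ^ (i.1 + 1))) := by
      intro i
      have : t ^ (p ^ (i.1 + 1)) = t * t ^ (p ^ (i.1 + 1) - 1) := by
        rw [← pow_succ']
        congr 1
        have := hd1 i
        omega
      rw [mul_pow, this, hc]
      ring
    calc t * z + ∑ i : Fin n, a i * (t * z) ^ (p ^ (i.1 + 1))
        = t * z + ∑ i : Fin n, t * (c i * z ^ (p ^ (i.1 + 1))) := by
          rw [Finset.sum_congr rfl fun i _ => hts i]
      _ = t * (z + ∑ i : Fin n, c i * z ^ (p ^ (i.1 + 1))) := by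
          rw [← Finset.mul_sum]; ring
      _ = t := by rw [hzeq, mul_one]
end

section
/- Let (R', I) be a henselian pair with R' a perfect F_p-algebra, and let a₁, …, aₙ ∈ R'. Then the additive map I → I given by x ↦ x^{1/pⁿ} + a₁^{1/p^{n-1}}·x^{1/p^{n-1}} + ⋯ + aₙ·x (using the inverse Frobenius, well defined since R' is perfect and I is a radical-type perfect ideal) is a bijection. -/
set_option maxRecDepth 8000

open Polynomial

/-- Key lemma: for a henselian pair `(R, I)` in characteristic `p`, the map
`x ↦ x + ∑ b i * x ^ p ^ (i+1)` is a bijection of `I`. -/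
private theorem stmt8_key (p n : ℕ) [Fact p.Prime] {R : Type*} [CommRing R] [CharP R p]
    (I : Ideal R) [HenselianRing R I] (b : Fin n → R) :
    Set.BijOn (fun x : R => x + ∑ i : Fin n, b i * x ^ p ^ (i.1 + 1))
      (I : Set R) (I : Set R) := by
  have hp : p.Prime := Fact.out
  have hq1 : ∀ i : Fin n, 2 ≤ p ^ (i.1 + 1) := fun i =>
    le_trans hp.two_le (Nat.le_self_pow (by omega) p)
  refine ⟨?_, ?_, ?_⟩
  · -- maps to
    intro x hx
    exact I.add_mem hx <| Ideal.sum_mem _ fun i _ =>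
      I.mul_mem_left _ (I.pow_mem_of_mem hx _ (by have := hq1 i; omega))
  · -- injective on I
    intro x hx y hy hxy
    simp only at hxy
    have h0 : (x - y) + ∑ i : Fin n, b i * (x - y) ^ p ^ (i.1 + 1) = 0 := by
      have e := sub_eq_zero_of_eq hxy
      rw [add_sub_add_comm, ← Finset.sum_sub_distrib] at e
      simp only [← mul_sub, ← sub_pow_char_pow] at e
      exact e
    have hfac : (x - y) * (1 + ∑ i : Fin n, b i * (x - y) ^ (p ^ (i.1 + 1) - 1)) = 0 := by
      rw [mul_add, mul_one, Finset.mul_sum]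
      rw [← h0]
      congr 1
      refine Finset.sum_congr rfl fun i _ => ?_
      rw [mul_left_comm]
      congr 1
      rw [← pow_succ']
      congr 1
      have := hq1 i; omega
    have hu : IsUnit (1 + ∑ i : Fin n, b i * (x - y) ^ (p ^ (i.1 + 1) - 1)) := by
      apply Ideal.isUnit_of_sub_one_mem_jacobson_bot
      apply HenselianRing.jac (I := I)
      simpa using Ideal.sum_mem _ fun i _ =>
        I.mul_mem_left (b i) (I.pow_mem_of_mem (I.sub_mem hx hy) _ (by have := hq1 i; omega))
    have := (hu.mul_left_eq_zero).mp hfac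
    exact sub_eq_zero.mp this
  · -- surjective onto I
    intro c hc
    obtain ⟨N, hN⟩ : ∃ N, N = p ^ n := ⟨_, rfl⟩
    have hN1 : 1 ≤ N := hN ▸ Nat.one_le_pow _ _ hp.pos
    have hqN : ∀ i : Fin n, p ^ (i.1 + 1) ≤ N := fun i =>
      hN ▸ Nat.pow_le_pow_right hp.one_lt.le (by omega)
    set d : Fin n → R := fun i => b i * c ^ (p ^ (i.1 + 1) - 1) with hd
    have hdI : ∀ i, d i ∈ I := fun i =>
      I.mul_mem_left _ (I.pow_mem_of_mem hc _ (by have := hq1 i; omega))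
    set Q : R[X] := X ^ N - (X ^ (N - 1) + ∑ i : Fin n, C (d i) * X ^ (N - p ^ (i.1 + 1)))
      with hQ
    have hevalQ : ∀ z : R, Q.eval z
        = z ^ N - (z ^ (N - 1) + ∑ i : Fin n, d i * z ^ (N - p ^ (i.1 + 1))) := by
      intro z
      rw [hQ, eval_sub, eval_pow, eval_X, eval_add, eval_pow, eval_X, eval_finset_sum]
      congr 2
      refine Finset.sum_congr rfl fun i _ => ?_
      rw [eval_mul, eval_C, eval_pow, eval_X]
    have hderQ : Q.derivative
        = C (N : R) * X ^ (N - 1) - (C ((N - 1 : ℕ) : R) * X ^ (N - 1 - 1)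
            + ∑ i : Fin n, C (d i * ((N - p ^ (i.1 + 1) : ℕ) : R)) * X ^ (N - p ^ (i.1 + 1) - 1)) := by
      rw [hQ, derivative_sub, derivative_add, derivative_X_pow, derivative_X_pow, derivative_sum]
      congr 2
      refine Finset.sum_congr rfl fun i _ => ?_
      rw [derivative_C_mul_X_pow]
    have hmonic : Q.Monic := by
      rw [hQ, sub_eq_add_neg]
      apply monic_X_pow_add
      rw [degree_neg]
      apply lt_of_le_of_lt (degree_add_le _ _)
      rw [max_lt_iff]
      constructor
      · exact lt_of_le_of_lt (degree_X_pow_le _) (Nat.cast_lt.mpr (by omega))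
      · apply lt_of_le_of_lt (degree_sum_le _ _)
        rw [Finset.sup_lt_iff (by exact WithBot.bot_lt_coe N)]
        intro i _
        refine lt_of_le_of_lt (degree_C_mul_X_pow_le _ _) ?_
        exact Nat.cast_lt.mpr (by have := hq1 i; have := hqN i; omega)
    have heval : Q.eval 1 ∈ I := by
      have h := hevalQ 1
      simp only [one_pow, mul_one] at h
      rw [h, show (1 : R) - (1 + ∑ i : Fin n, d i) = -∑ i : Fin n, d i by ring]
      exact I.neg_mem (Ideal.sum_mem _ fun i _ => hdI i)
    have hder : IsUnit (Ideal.Quotient.mk I (Q.derivative.eval 1)) := by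
      have hd1 : Q.derivative.eval 1
          = (N : R) - (((N - 1 : ℕ) : R)
              + ∑ i : Fin n, d i * ((N - p ^ (i.1 + 1) : ℕ) : R)) := by
        rw [hderQ, eval_sub, eval_add, eval_mul, eval_C, eval_pow, eval_X, one_pow, mul_one,
          eval_mul, eval_C, eval_pow, eval_X, one_pow, mul_one, eval_finset_sum]
        congr 2
        refine Finset.sum_congr rfl fun i _ => ?_
        rw [eval_mul, eval_C, eval_pow, eval_X, one_pow, mul_one]
      have hcast : ((N : ℕ) : R) = ((N - 1 : ℕ) : R) + 1 := by
        conv_lhs => rw [show N = (N - 1) + 1 by omega]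
        push_cast
        ring
      have hmem : Q.derivative.eval 1 - 1 ∈ I := by
        rw [hd1, hcast,
          show ((N - 1 : ℕ) : R) + 1 - (((N - 1 : ℕ) : R)
              + ∑ i : Fin n, d i * ((N - p ^ (i.1 + 1) : ℕ) : R)) - 1
            = -∑ i : Fin n, d i * ((N - p ^ (i.1 + 1) : ℕ) : R) by ring]
        exact I.neg_mem (Ideal.sum_mem _ fun i _ => I.mul_mem_right _ (hdI i))
      have : Ideal.Quotient.mk I (Q.derivative.eval 1) = 1 := by
        rw [← map_one (Ideal.Quotient.mk I), Ideal.Quotient.mk_eq_mk_iff_sub_mem]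
        simpa using hmem
      rw [this]; exact isUnit_one
    obtain ⟨α, hroot, hαI⟩ := HenselianRing.is_henselian (I := I) Q hmonic 1 heval hder
    have hαu : IsUnit α :=
      Ideal.isUnit_of_sub_one_mem_jacobson_bot α (HenselianRing.jac (I := I) hαI)
    obtain ⟨u, hu⟩ := hαu
    have hroot' : α ^ N - (α ^ (N - 1) + ∑ i : Fin n, d i * α ^ (N - p ^ (i.1 + 1))) = 0 := by
      rw [← hevalQ α]; exact hroot
    have hk : ∀ k : ℕ, k ≤ N → α ^ N * (↑u⁻¹ : R) ^ k = α ^ (N - k) := by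
      intro k hkN
      have h1 : α ^ N = α ^ (N - k) * α ^ k := by rw [← pow_add]; congr 1; omega
      rw [h1, mul_assoc, ← hu, ← mul_pow, Units.mul_inv, one_pow, mul_one]
    have hy : (↑u⁻¹ : R) + ∑ i : Fin n, d i * (↑u⁻¹ : R) ^ p ^ (i.1 + 1) = 1 := by
      refine ((hu ▸ u.isUnit : IsUnit α).pow N).mul_left_cancel ?_
      rw [mul_add, Finset.mul_sum, mul_one]
      have h1 : α ^ N * (↑u⁻¹ : R) = α ^ (N - 1) := by
        have := hk 1 hN1; rwa [pow_one] at this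
      rw [h1]
      have h2 : ∀ i : Fin n, α ^ N * (d i * (↑u⁻¹ : R) ^ p ^ (i.1 + 1))
          = d i * α ^ (N - p ^ (i.1 + 1)) := fun i => by
        rw [mul_left_comm, hk _ (hqN i)]
      rw [Finset.sum_congr rfl fun i _ => h2 i]
      linear_combination -hroot'
    refine ⟨c * ↑u⁻¹, I.mul_mem_right _ hc, ?_⟩
    have hterm : ∀ i : Fin n, b i * (c * (↑u⁻¹ : R)) ^ p ^ (i.1 + 1)
        = c * (d i * (↑u⁻¹ : R) ^ p ^ (i.1 + 1)) := by
      intro i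
      rw [mul_pow, hd]
      have : c ^ p ^ (i.1 + 1) = c ^ (p ^ (i.1 + 1) - 1) * c := by
        rw [← pow_succ]; congr 1; have := hq1 i; omega
      rw [this]; ring
    show c * ↑u⁻¹ + ∑ i : Fin n, b i * (c * ↑u⁻¹) ^ p ^ (i.1 + 1) = c
    rw [Finset.sum_congr rfl fun i _ => hterm i, ← Finset.mul_sum, ← mul_add, hy, mul_one]

/-- Let `(R', I)` be a henselian pair with `R'` a perfect `F_p`-algebra whose
ideal `I` is stable under the inverse Frobenius (expressed by `x^p ∈ I → x ∈ I`), and let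
`a₁, …, aₙ ∈ R'`.  Writing `ψ` for the inverse Frobenius (hypothesized via `ψ x ^ p = x` and
`ψ (x ^ p) = x`), the additive map `I → I` given by
`x ↦ x^{1/pⁿ} + a₁^{1/p^{n-1}} x^{1/p^{n-1}} + ⋯ + aₙ x` is a bijection. -/
theorem stmt8 (p n : ℕ) [Fact p.Prime] (R' : Type*) [CommRing R'] [CharP R' p]
    [PerfectRing R' p] (I : Ideal R') [HenselianRing R' I]
    (hrad : ∀ x : R', x ^ p ∈ I → x ∈ I)
    (a : Fin n → R') (ψ : R' → R')
    (hψ₁ : ∀ x : R', ψ x ^ p = x) (hψ₂ : ∀ x : R', ψ (x ^ p) = x) :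
    Set.BijOn
      (fun x : R' => ψ^[n] x + ∑ i : Fin n, ψ^[n - 1 - i.1] (a i) * ψ^[n - 1 - i.1] x)
      (I : Set R') (I : Set R') := by
  have hp : p.Prime := Fact.out
  -- basic properties of ψ
  have hψ0 : ψ 0 = 0 := by
    have := hψ₂ 0
    rwa [zero_pow hp.ne_zero] at this
  have hψadd : ∀ x y : R', ψ (x + y) = ψ x + ψ y := by
    intro x y
    have h : (ψ x + ψ y) ^ p = x + y := by rw [add_pow_char, hψ₁, hψ₁]
    rw [← h, hψ₂]
  have hψmul : ∀ x y : R', ψ (x * y) = ψ x * ψ y := by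
    intro x y
    have h : (ψ x * ψ y) ^ p = x * y := by rw [mul_pow, hψ₁, hψ₁]
    rw [← h, hψ₂]
  -- iterates of ψ
  have hiter_add : ∀ (k : ℕ) (x y : R'), ψ^[k] (x + y) = ψ^[k] x + ψ^[k] y := by
    intro k x y
    induction k with
    | zero => simp
    | succ k ih =>
      rw [Function.iterate_succ_apply', Function.iterate_succ_apply',
        Function.iterate_succ_apply', ih, hψadd]
  have hiter_mul : ∀ (k : ℕ) (x y : R'), ψ^[k] (x * y) = ψ^[k] x * ψ^[k] y := by
    intro k x y
    induction k with
    | zero => simp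
    | succ k ih =>
      rw [Function.iterate_succ_apply', Function.iterate_succ_apply',
        Function.iterate_succ_apply', ih, hψmul]
  have hiter_sum : ∀ (k : ℕ) (f : Fin n → R'),
      ψ^[k] (∑ i : Fin n, f i) = ∑ i : Fin n, ψ^[k] (f i) := fun k f =>
    map_sum (AddMonoidHom.mk' (ψ^[k]) (hiter_add k)) f Finset.univ
  have hiter_strip : ∀ (k : ℕ) (x : R'), ψ^[k] (x ^ p ^ k) = x := by
    intro k
    induction k with
    | zero => intro x; simp
    | succ k ih =>
      intro x
      rw [pow_succ, pow_mul, Function.iterate_succ_apply, hψ₂]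
      exact ih x
  have hsplit : ∀ (i : Fin n) (t : R'), ψ^[n] (t ^ p ^ (i.1 + 1)) = ψ^[n - 1 - i.1] t := by
    intro i t
    have h2 := Function.iterate_add_apply ψ (n - 1 - i.1) (i.1 + 1) (t ^ p ^ (i.1 + 1))
    rw [hiter_strip] at h2
    rw [show n - 1 - i.1 + (i.1 + 1) = n from by have := i.isLt; omega] at h2
    exact h2
  -- the map is `ψ^[n]` composed with the standard map
  have hmapeq : (fun x : R' => ψ^[n] x + ∑ i : Fin n, ψ^[n - 1 - i.1] (a i) * ψ^[n - 1 - i.1] x)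
      = (ψ^[n]) ∘ (fun x : R' => x + ∑ i : Fin n, (a i) ^ p ^ (i.1 + 1) * x ^ p ^ (i.1 + 1)) := by
    funext x
    simp only [Function.comp_apply]
    rw [hiter_add, hiter_sum]
    congr 1
    refine (Finset.sum_congr rfl fun i _ => ?_).symm
    rw [hiter_mul, hsplit i (a i), hsplit i x]
  -- `ψ` and its iterates are bijections of `I`
  have hψI : Set.BijOn ψ (I : Set R') (I : Set R') := by
    refine ⟨fun x hx => hrad _ (by rw [hψ₁]; exact hx), fun x _ y _ h => ?_,
      fun x hx => ⟨x ^ p, I.pow_mem_of_mem hx p hp.pos, hψ₂ x⟩⟩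
    rw [← hψ₁ x, ← hψ₁ y, h]
  have hψIn : ∀ k : ℕ, Set.BijOn (ψ^[k]) (I : Set R') (I : Set R') := by
    intro k
    induction k with
    | zero => simpa using Set.bijOn_id _
    | succ k ih =>
      rw [Function.iterate_succ']
      exact hψI.comp ih
  rw [hmapeq]
  exact (hψIn n).comp (stmt8_key p n I fun i => (a i) ^ p ^ (i.1 + 1))
end

section
/- Let k be a separably closed field of characteristic p, V a finite-dimensional k-vector space, and F : V → V an additive map satisfying F(cv) = c^p F(v) for c ∈ k, v ∈ V. Then the map F − 1 : V → V (i.e., v ↦ F(v) − v) is surjective. -/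
/-!
Fix `w`. In finite dimension the iterates `F^[i] w` satisfy a relation
`F^[N+1] w = ∑ i ≤ N, c i • F^[i] w`, so we may look for a preimage of `w` of the form
`v = ∑ i ≤ N, x i • F^[i] w`. Comparing coefficients in `F v - v = w` determines every `x i`
recursively from `t = x N`, and the last coefficient leaves a single equation `P(t) = t` where
`P` is a polynomial in `t ^ p`. Then `P - X` has derivative `-1`, so it is separable and has a root
in the separably closed field `k`.
-/

open Polynomial Finset Function

theorem IsSepClosed.exists_eval_eq_self_of_derivative_eq_zero {k : Type*} [Field k]
    [IsSepClosed k] (P : k[X]) (hP : derivative P = 0) : ∃ t, P.eval t = t := by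
  have hderiv : derivative (P - X) = -1 := by simp [hP]
  have hsep : (P - X).Separable := ⟨0, -1, by rw [hderiv]; ring⟩
  have hdeg : (P - X).degree ≠ 0 := fun h => by
    rw [eq_C_of_degree_le_zero h.le, derivative_C] at hderiv
    exact one_ne_zero (neg_eq_zero.mp hderiv.symm)
  obtain ⟨t, ht⟩ := IsSepClosed.exists_root _ hdeg hsep
  exact ⟨t, sub_eq_zero.mp (by simpa using ht)⟩

theorem exists_iterate_succ_eq_sum (R : Type*) {M : Type*} [Ring R] [AddCommGroup M] [Module R M]
    [IsNoetherian R M] (f : M → M) (w : M) :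
    ∃ (n : ℕ) (c : ℕ → R), f^[n + 1] w = ∑ i ∈ range (n + 1), c i • f^[i] w := by
  let W : ℕ →o Submodule R M :=
    ⟨fun n => Submodule.span R ((f^[·] w) '' ↑(range n)), fun _ _ hnm =>
      Submodule.span_mono (Set.image_mono (by simpa using hnm))⟩
  obtain ⟨n, hn⟩ := monotone_stabilizes_iff_noetherian.mpr ‹_› W
  have hmem : f^[n + 1] w ∈ W (n + 1) := by
    rw [← hn (n + 1) n.le_succ, hn (n + 2) (by omega)]
    exact Submodule.subset_span ⟨n + 1, by simp, rfl⟩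
  obtain ⟨l, hl, hsum⟩ := (Finsupp.mem_span_image_iff_linearCombination R).mp hmem
  refine ⟨n, l, ?_⟩
  rw [← hsum, Finsupp.linearCombination_apply,
    Finsupp.sum_of_support_subset _ ((Finsupp.mem_supported _ _).mp hl) _ (by simp)]

/-- If `v = ∑ i ≤ N, x i • F^[i] w` with `F^[N+1] w = ∑ i ≤ N, c i • F^[i] w`, comparing
coefficients in `F v - v = w` gives exactly this recursion for `x`, with `t = x N`. -/
def langCoeff {R : Type*} [CommRing R] (p : ℕ) (c : ℕ → R) (t : R) : ℕ → R
  | 0 => c 0 * t ^ p - 1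
  | i + 1 => langCoeff p c t i ^ p + c (i + 1) * t ^ p

section langCoeff

variable {R : Type*} [CommRing R] (p : ℕ) (c : ℕ → R)

theorem map_langCoeff {S : Type*} [CommRing S] (φ : R →+* S) (t : R) (i : ℕ) :
    φ (langCoeff p c t i) = langCoeff p (φ ∘ c) (φ t) i := by
  induction i with
  | zero => simp [langCoeff]
  | succ i ih => simp [langCoeff, ih]

theorem derivative_langCoeff_X [CharP R p] (i : ℕ) :
    derivative (langCoeff p (C ∘ c) X i) = 0 := by
  induction i with
  | zero => simp [langCoeff, derivative_X_pow]
  | succ i ih => simp [langCoeff, derivative_pow, ih]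

end langCoeff

theorem exists_langCoeff_eq_self {k : Type*} [Field k] [IsSepClosed k] (p : ℕ) [CharP k p]
    (c : ℕ → k) (N : ℕ) : ∃ t, langCoeff p c t N = t := by
  obtain ⟨t, ht⟩ := IsSepClosed.exists_eval_eq_self_of_derivative_eq_zero _
    (derivative_langCoeff_X p c N)
  refine ⟨t, ?_⟩
  rw [← coe_evalRingHom, map_langCoeff] at ht
  simpa [Function.comp_def] using ht

theorem apply_sub_eq_of_langCoeff_eq_self {R V : Type*} [CommRing R] {p : ℕ} [ExpChar R p]
    [AddCommGroup V] [Module R V] (F : V →ₛₗ[frobenius R p] V) (w : V) (c : ℕ → R) (N : ℕ)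
    (hrel : F^[N + 1] w = ∑ i ∈ range (N + 1), c i • F^[i] w) (t : R)
    (ht : langCoeff p c t N = t) :
    F (∑ i ∈ range (N + 1), langCoeff p c t i • F^[i] w)
      - ∑ i ∈ range (N + 1), langCoeff p c t i • F^[i] w = w := by
  set x := langCoeff p c t
  have hF : F (∑ i ∈ range (N + 1), x i • F^[i] w)
      = ∑ i ∈ range N, x i ^ p • F^[i + 1] w + t ^ p • (∑ i ∈ range N, c (i + 1) • F^[i + 1] w
        + c 0 • w) := by
    simp only [map_sum, map_smulₛₗ, frobenius_def, ← iterate_succ_apply' F]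
    rw [sum_range_succ, ht, hrel, sum_range_succ', iterate_zero_apply]
  have hv : ∑ i ∈ range (N + 1), x i • F^[i] w
      = ∑ i ∈ range N, (x i ^ p + c (i + 1) * t ^ p) • F^[i + 1] w + (c 0 * t ^ p - 1) • w := by
    rw [sum_range_succ', iterate_zero_apply]
    rfl
  rw [hF, hv]
  simp only [add_smul, sum_add_distrib, smul_add, smul_sum, smul_smul, mul_comm (t ^ p)]
  module

/-- Let `k` be a separably closed field of characteristic `p`, `V` a
finite-dimensional `k`-vector space, and `F : V → V` an additive map satisfying
`F (c • v) = c^p • F v`.  Then the map `F − 1 : V → V`, `v ↦ F v − v`, is surjective. -/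
theorem stmt10 (p : ℕ) [Fact p.Prime] (k V : Type*) [Field k] [IsSepClosed k] [CharP k p]
    [AddCommGroup V] [Module k V] [FiniteDimensional k V]
    (F : V → V)
    (hFadd : ∀ x y, F (x + y) = F x + F y)
    (hFsemi : ∀ (c : k) (v : V), F (c • v) = c ^ p • F v) :
    Function.Surjective (fun v : V => F v - v) := by
  let Fₛₗ : V →ₛₗ[frobenius k p] V := { toFun := F, map_add' := hFadd, map_smul' := hFsemi }
  intro w
  obtain ⟨N, c, hrel⟩ := exists_iterate_succ_eq_sum k Fₛₗ w
  obtain ⟨t, ht⟩ := exists_langCoeff_eq_self p c N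
  exact ⟨_, apply_sub_eq_of_langCoeff_eq_self Fₛₗ w c N hrel t ht⟩
end

section
/- Let k ⊂ k' be an extension of separably closed fields of characteristic p, V a finite-dimensional k-vector space, and F : V → V a Frobenius-semilinear map. Then the inclusion V → k' ⊗_k V induces an isomorphism on fixed points: {v ∈ V : F(v) = v} → {w ∈ k' ⊗_k V : F'(w) = w}, where F' = φ_{k'} ⊗ F is the induced semilinear endomorphism. -/
/-!
Write a fixed point `w` of `F'` in the basis `1 ⊗ bᵢ` of `k' ⊗ V`, with coordinates `cᵢ ∈ k'`.
The equation `F' w = w` reads `cⱼ = ∑ᵢ aᵢⱼ cᵢ ^ p` with `aᵢⱼ ∈ k`, so the finite set `S = {cᵢ}`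
lies in the `k`-span of `S ^ p`. A `p`-semilinear map cannot raise the dimension of a span, so
`span (S ^ p ^ m) = span S` for every `m`. Thus all `p ^ m`-th powers of each `cᵢ` lie in one
finite-dimensional space, so `cᵢ` is algebraic, hence purely inseparable over the separably closed
field `k`: `cᵢ ^ p ^ m ∈ k` for `m` large. Then `S ⊆ span (S ^ p ^ m) ⊆ k`, so `w` comes from `V`.
-/

open Submodule
open scoped TensorProduct

section
variable {R A : Type*} [CommSemiring R] [CommSemiring A] [Algebra R A] (p : ℕ) [ExpChar A p]

theorem pow_expChar_pow_mem_span_image (n : ℕ) {T : Set A} {x : A} (hx : x ∈ span R T) :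
    x ^ p ^ n ∈ span R ((· ^ p ^ n) '' T) := by
  induction hx using Submodule.span_induction with
  | mem x hx => exact subset_span (Set.mem_image_of_mem _ hx)
  | zero => rw [zero_pow (expChar_pow_pos A p n).ne']; exact zero_mem _
  | add x y _ _ hx hy => rw [add_pow_expChar_pow]; exact add_mem hx hy
  | smul a x _ hx => rw [smul_pow]; exact smul_mem _ _ hx
end

section
variable {k K : Type*} [Field k] [CommRing K] [Algebra k K] (p : ℕ) [ExpChar K p]

theorem finrank_span_image_pow_expChar_pow_le (n : ℕ) {T : Set K} (hT : T.Finite) :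
    Module.finrank k (span k ((· ^ p ^ n) '' T)) ≤ Module.finrank k (span k T) := by
  have : FiniteDimensional k (span k T) := FiniteDimensional.span_of_finite k hT
  set b := Module.finBasis k (span k T)
  have hT_le : T ⊆ span k (Set.range fun i => (b i : K)) := by
    change T ⊆ span k (Set.range ((span k T).subtype ∘ b))
    rw [Set.range_comp, span_image, b.span_eq, Submodule.map_top, range_subtype]
    exact subset_span
  calc Module.finrank k (span k ((· ^ p ^ n) '' T))
      ≤ Module.finrank k (span k (Set.range fun i => (b i : K) ^ p ^ n)) := by
        have := FiniteDimensional.span_of_finite k (Set.finite_range fun i => (b i : K) ^ p ^ n)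
        apply Submodule.finrank_mono
        rw [span_le]
        rintro _ ⟨t, ht, rfl⟩
        simpa [← Set.range_comp, Function.comp_def] using
          pow_expChar_pow_mem_span_image p n (hT_le ht)
    _ ≤ Module.finrank k (span k T) := (finrank_range_le_card _).trans (by simp)

theorem span_image_pow_expChar_pow_eq {S : Set K} (hS : S.Finite) (h : S ⊆ span k ((· ^ p) '' S))
    (m : ℕ) : span k ((· ^ p ^ m) '' S) = span k S := by
  have step (n : ℕ) : span k ((· ^ p ^ n) '' S) ≤ span k ((· ^ p ^ (n + 1)) '' S) := by
    rw [span_le]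
    rintro _ ⟨s, hs, rfl⟩
    have := pow_expChar_pow_mem_span_image p n (h hs)
    rw [Set.image_image] at this
    simp only [← pow_mul, ← pow_succ'] at this
    exact this
  have : FiniteDimensional k (span k ((· ^ p ^ m) '' S)) :=
    FiniteDimensional.span_of_finite k (hS.image _)
  have hle : span k S ≤ span k ((· ^ p ^ m) '' S) := by
    have := monotone_nat_of_le_succ step (Nat.zero_le m)
    simp only [pow_zero, pow_one, Set.image_id'] at this
    exact this
  exact (Submodule.eq_of_le_of_finrank_le hle (finrank_span_image_pow_expChar_pow_le p m hS)).symm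
end

theorem isAlgebraic_of_forall_pow_pow_mem {k K : Type*} [Field k] [CommRing K] [Algebra k K]
    {U : Submodule k K} [FiniteDimensional k U] {q : ℕ} (hq : 1 < q) {x : K}
    (h : ∀ m, x ^ q ^ m ∈ U) : IsAlgebraic k x := by
  by_contra hx
  have hpow : LinearIndependent k (fun n : ℕ => x ^ n) := by
    have := (Polynomial.basisMonomials k).linearIndependent.map' (Polynomial.aeval x).toLinearMap
      (LinearMap.ker_eq_bot.mpr (transcendental_iff_injective.mp hx))
    simpa [Function.comp_def] using this
  exact Module.Finite.not_linearIndependent_of_infinite (R := k)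
    (fun m : ℕ => (⟨x ^ q ^ m, h m⟩ : U))
    (.of_comp U.subtype (hpow.comp _ (Nat.pow_right_injective hq)))

theorem exists_pow_mem_range_of_isIntegral {k K : Type*} [Field k] [IsSepClosed k] [Field K]
    [Algebra k K] (p : ℕ) [ExpChar k p] {x : K} (hx : IsIntegral k x) :
    ∃ n, x ^ p ^ n ∈ (algebraMap k K).range := by
  obtain ⟨n, y, hy⟩ := IsPurelyInseparable.pow_mem k p (⟨x, hx⟩ : integralClosure k K)
  exact ⟨n, y, congrArg Subtype.val hy⟩

theorem TensorProduct.one_tmul_injective {R A M : Type*} [CommRing R] [Ring A] [Algebra R A]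
    [AddCommGroup M] [Module R M] [Module.Flat R M] (hA : Function.Injective (algebraMap R A)) :
    Function.Injective (fun m : M => (1 : A) ⊗ₜ[R] m) := by
  convert (Module.Flat.rTensor_preserves_injective_linearMap (M := M) (Algebra.linearMap R A)
    hA).comp (TensorProduct.lid R M).symm.injective
  simp

section
variable {R A M ι : Type*} [CommRing R] [CommRing A] [Algebra R A] [AddCommGroup M] [Module R M]
  [Fintype ι] (b : Module.Basis ι R M)

theorem Module.Basis.sum_repr_baseChange_tmul (w : A ⊗[R] M) :
    ∑ i, (b.baseChange A).repr w i ⊗ₜ[R] b i = w := by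
  conv_rhs => rw [← (b.baseChange A).sum_repr w]
  simp [Module.Basis.baseChange_apply, TensorProduct.smul_tmul']

theorem Module.Basis.exists_one_tmul_eq_of_repr_baseChange_mem_range {w : A ⊗[R] M}
    (hw : ∀ i, (b.baseChange A).repr w i ∈ Set.range (algebraMap R A)) :
    ∃ m : M, (1 : A) ⊗ₜ[R] m = w := by
  choose d hd using hw
  refine ⟨∑ i, d i • b i, ?_⟩
  conv_rhs => rw [← b.sum_repr_baseChange_tmul w]
  simp [TensorProduct.tmul_sum, ← hd, Algebra.algebraMap_eq_smul_one, TensorProduct.smul_tmul]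

theorem Module.Basis.range_repr_baseChange_subset_span_image_pow (p : ℕ) {F : M → M}
    {F' : A ⊗[R] M → A ⊗[R] M} (hF'add : ∀ x y, F' (x + y) = F' x + F' y)
    (hF' : ∀ (c : A) (m : M), F' (c ⊗ₜ[R] m) = (c ^ p) ⊗ₜ[R] F m) {w : A ⊗[R] M} (hw : F' w = w) :
    Set.range ((b.baseChange A).repr w) ⊆
      span R ((· ^ p) '' Set.range ((b.baseChange A).repr w)) := by
  set c : ι → A := ⇑((b.baseChange A).repr w)
  have hF'w : F' w = ∑ i, (c i ^ p) ⊗ₜ[R] F (b i) := by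
    conv_lhs => rw [← b.sum_repr_baseChange_tmul w]
    exact (map_sum (AddMonoidHom.mk' F' hF'add) _ _).trans (by simp [hF', c])
  rintro _ ⟨j, rfl⟩
  have hcj : c j = ∑ i, b.repr (F (b i)) j • c i ^ p := by
    calc c j = (b.baseChange A).repr (F' w) j := by rw [hw]
      _ = _ := by simp [hF'w, Module.Basis.baseChange_repr_tmul]
  rw [hcj]
  exact sum_mem fun i _ => smul_mem _ _ (subset_span ⟨c i, ⟨i, rfl⟩, rfl⟩)
end

theorem subset_range_algebraMap_of_subset_span_image_pow {k K : Type*} [Field k] [IsSepClosed k]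
    [Field K] [Algebra k K] (p : ℕ) [hp : Fact p.Prime] [CharP k p] {S : Set K} (hS : S.Finite)
    (h : S ⊆ span k ((· ^ p) '' S)) : S ⊆ Set.range (algebraMap k K) := by
  have : ExpChar K p := expChar_of_injective_algebraMap (algebraMap k K).injective p
  have : FiniteDimensional k (span k S) := FiniteDimensional.span_of_finite k hS
  have hspan := span_image_pow_expChar_pow_eq p hS h
  have hint (s : K) (hs : s ∈ S) : IsIntegral k s :=
    (isAlgebraic_of_forall_pow_pow_mem hp.out.one_lt fun m =>
      hspan m ▸ subset_span (Set.mem_image_of_mem _ hs)).isIntegral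
  have hev : ∀ᶠ m in Filter.atTop, ∀ s ∈ S, s ^ p ^ m ∈ (algebraMap k K).range := by
    refine (Filter.eventually_all_finite hS).2 fun s hs => ?_
    obtain ⟨n, hn⟩ := exists_pow_mem_range_of_isIntegral p (hint s hs)
    filter_upwards [Filter.eventually_ge_atTop n] with m hm
    rw [← Nat.sub_add_cancel hm, pow_add, pow_mul']
    exact pow_mem hn _
  obtain ⟨m, hm⟩ := hev.exists
  intro s hs
  have hle : span k ((· ^ p ^ m) '' S) ≤ 1 := by
    rw [span_le]
    rintro _ ⟨t, ht, rfl⟩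
    exact Submodule.mem_one.2 (hm t ht)
  exact Submodule.mem_one.1 (hle (hspan m ▸ subset_span hs))

/-- Let `k ⊂ k'` be an extension of separably closed fields of characteristic
`p`, `V` a finite-dimensional `k`-vector space, and `F : V → V` a Frobenius-semilinear map.
Let `F'` be the induced semilinear endomorphism `φ_{k'} ⊗ F` of `k' ⊗_k V` (hypothesized via
its values on pure tensors).  Then `v ↦ 1 ⊗ v` induces a bijection on fixed points
`{v ∈ V : F v = v} → {w ∈ k' ⊗_k V : F' w = w}`. -/
theorem stmt11 (p : ℕ) [Fact p.Prime] (k k' V : Type*) [Field k] [IsSepClosed k] [CharP k p]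
    [Field k'] [Algebra k k']
    [AddCommGroup V] [Module k V] [FiniteDimensional k V]
    (F : V → V)
    (F' : k' ⊗[k] V → k' ⊗[k] V)
    (hF'add : ∀ x y, F' (x + y) = F' x + F' y)
    (hF' : ∀ (c : k') (v : V), F' (c ⊗ₜ[k] v) = (c ^ p) ⊗ₜ[k] F v) :
    Function.Bijective (fun v : {v : V // F v = v} =>
      (⟨(1 : k') ⊗ₜ[k] (v : V), by simp [hF', v.2]⟩ : {w : k' ⊗[k] V // F' w = w})) := by
  have hinj := TensorProduct.one_tmul_injective (M := V) (algebraMap k k').injective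
  refine ⟨fun v w hvw => Subtype.ext (hinj (congrArg Subtype.val hvw)), ?_⟩
  rintro ⟨w, hw⟩
  let b := Module.finBasis k V
  obtain ⟨v, rfl⟩ := b.exists_one_tmul_eq_of_repr_baseChange_mem_range fun i =>
    subset_range_algebraMap_of_subset_span_image_pow p (Set.finite_range _)
      (b.range_repr_baseChange_subset_span_image_pow p hF'add hF' hw) ⟨i, rfl⟩
  have hFv : F v = v := hinj (by simpa [hF'] using hw)
  exact ⟨⟨v, hFv⟩, rfl⟩
end
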